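/- arXiv:2110.04715 — 8 statements merged into one kernel-verified Lean document; each statement's English description precedes it below -/
import Mathlib

section
/- Given a 3-LieDer pair (L, φ_L), an abelian 3-LieDer pair (M, φ_M), a skew trilinear map ψ: ∧³L → M, and a linear map χ: L → M, the space L ⊕ M with bracket [(x,m),(y,n),(z,p)]_ψ = ([x,y,z], ψ(x,y,z)) and map φ(x,m) = (φ_L(x), φ_M(m) + χ(x)) is a 3-LieDer pair if and only if (ψ, χ) is a 2-cocycle in the 3-LieDer pair cohomology with trivial coefficients, i.e., ψ(x,y,[z,v,w]) = ψ([x,y,z],v,w) + ψ(z,[x,y,v],w) + ψ(z,v,[x,y,w]) and φ_M(ψ(x,y,z)) + χ([x,y,z]) = ψ(φ_L(x),y,z) + ψ(x,φ_L(y),z) + ψ(x,y,φ_L(z)). -/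
/-! Since the bracket on `L × M` only reads the `L`-components, every axiom of a 3-LieDer pair on
`L × M` splits into its `L`-component, which is the corresponding axiom for `(L, φ_L)`, and its
`M`-component, which is one of the two cocycle identities. -/

/-- A 3-Lie algebra: a module with a trilinear skew-symmetric bracket satisfying
the fundamental (Filippov) identity. -/
structure ThreeLieAlgebra (K L : Type) [Field K] [AddCommGroup L] [Module K L] where
  br : L →ₗ[K] L →ₗ[K] L →ₗ[K] L
  skew₁₂ : ∀ x y z, br x y z = - br y x z
  skew₂₃ : ∀ x y z, br x y z = - br x z y
  fund : ∀ x y u v w,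
    br x y (br u v w) = br (br x y u) v w + br u (br x y v) w + br u v (br x y w)

/-- A derivation of a 3-Lie algebra. -/
def IsDer {K L : Type} [Field K] [AddCommGroup L] [Module K L]
    (A : ThreeLieAlgebra K L) (φ : L →ₗ[K] L) : Prop :=
  ∀ x y z, φ (A.br x y z) = A.br (φ x) y z + A.br x (φ y) z + A.br x y (φ z)

variable {K L M : Type} [Field K] [AddCommGroup L] [Module K L] [AddCommGroup M] [Module K M]

def extBr (A : ThreeLieAlgebra K L) (ψ : L →ₗ[K] L →ₗ[K] L →ₗ[K] M) :
    (L × M) →ₗ[K] (L × M) →ₗ[K] (L × M) →ₗ[K] (L × M) where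
  toFun a :=
  { toFun b :=
    { toFun c := (A.br a.1 b.1 c.1, ψ a.1 b.1 c.1)
      map_add' c c' := by simp
      map_smul' r c := by simp }
    map_add' b b' := by ext c <;> simp
    map_smul' r b := by ext c <;> simp }
  map_add' a a' := by ext c <;> simp
  map_smul' r a := by ext c <;> simp

def ThreeLieAlgebra.extension (A : ThreeLieAlgebra K L) (ψ : L →ₗ[K] L →ₗ[K] L →ₗ[K] M)
    (hψ₁₂ : ∀ x y z, ψ x y z = - ψ y x z) (hψ₂₃ : ∀ x y z, ψ x y z = - ψ x z y)
    (hψ : ∀ x y z v w : L,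
      ψ x y (A.br z v w) = ψ (A.br x y z) v w + ψ z (A.br x y v) w + ψ z v (A.br x y w)) :
    ThreeLieAlgebra K (L × M) where
  br := extBr A ψ
  skew₁₂ a b c := Prod.ext (A.skew₁₂ a.1 b.1 c.1) (hψ₁₂ a.1 b.1 c.1)
  skew₂₃ a b c := Prod.ext (A.skew₂₃ a.1 b.1 c.1) (hψ₂₃ a.1 b.1 c.1)
  fund a b u v w := Prod.ext (A.fund a.1 b.1 u.1 v.1 w.1) (hψ a.1 b.1 u.1 v.1 w.1)

section ExtensionBracket

variable {A : ThreeLieAlgebra K L} {ψ : L →ₗ[K] L →ₗ[K] L →ₗ[K] M}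
  (B : ThreeLieAlgebra K (L × M))

lemma br_eq_of_br_mk_eq
    (hB : ∀ (x y z : L) (m n p : M), B.br (x, m) (y, n) (z, p) = (A.br x y z, ψ x y z))
    (a b c : L × M) : B.br a b c = (A.br a.1 b.1 c.1, ψ a.1 b.1 c.1) :=
  hB a.1 b.1 c.1 a.2 b.2 c.2

lemma fund_cocycle_of_br_mk_eq
    (hB : ∀ (x y z : L) (m n p : M), B.br (x, m) (y, n) (z, p) = (A.br x y z, ψ x y z))
    (x y z v w : L) :
    ψ x y (A.br z v w) = ψ (A.br x y z) v w + ψ z (A.br x y v) w + ψ z v (A.br x y w) := by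
  simpa [br_eq_of_br_mk_eq B hB] using
    congrArg Prod.snd (B.fund (x, 0) (y, 0) (z, 0) (v, 0) (w, 0))

lemma isDer_prod_iff_of_br_mk_eq
    (hB : ∀ (x y z : L) (m n p : M), B.br (x, m) (y, n) (z, p) = (A.br x y z, ψ x y z))
    (φL : L →ₗ[K] L) (φM : M →ₗ[K] M) (χ : L →ₗ[K] M) :
    IsDer B (LinearMap.prod (φL ∘ₗ LinearMap.fst K L M)
        (φM ∘ₗ LinearMap.snd K L M + χ ∘ₗ LinearMap.fst K L M)) ↔
      IsDer A φL ∧ ∀ x y z : L,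
        φM (ψ x y z) + χ (A.br x y z) = ψ (φL x) y z + ψ x (φL y) z + ψ x y (φL z) := by
  simp only [IsDer, br_eq_of_br_mk_eq B hB, LinearMap.prod_apply, LinearMap.add_apply,
    LinearMap.comp_apply, LinearMap.fst_apply, LinearMap.snd_apply, Function.prod,
    Prod.mk_add_mk, Prod.mk.injEq]
  exact ⟨fun h => ⟨fun x y z => (h (x, 0) (y, 0) (z, 0)).1,
      fun x y z => (h (x, 0) (y, 0) (z, 0)).2⟩,
    fun ⟨hφL, hχ⟩ a b c => ⟨hφL a.1 b.1 c.1, hχ a.1 b.1 c.1⟩⟩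

end ExtensionBracket

/-- `L ⊕ M` with bracket `([x,y,z], ψ(x,y,z))` and map
`(x,m) ↦ (φ_L x, φ_M m + χ x)` is a 3-LieDer pair iff `(ψ, χ)` is a 2-cocycle
of the 3-LieDer pair `(L, φ_L)` with trivial coefficients in `M`. -/
theorem extension_iff_two_cocycle
    (K L M : Type) [Field K] [AddCommGroup L] [Module K L] [AddCommGroup M] [Module K M]
    (A : ThreeLieAlgebra K L) (φL : L →ₗ[K] L) (hφL : IsDer A φL)
    (φM : M →ₗ[K] M)
    (ψ : L →ₗ[K] L →ₗ[K] L →ₗ[K] M)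
    (hψ₁₂ : ∀ x y z, ψ x y z = - ψ y x z)
    (hψ₂₃ : ∀ x y z, ψ x y z = - ψ x z y)
    (χ : L →ₗ[K] M) :
    (∃ B : ThreeLieAlgebra K (L × M),
      (∀ (x y z : L) (m n p : M),
        B.br (x, m) (y, n) (z, p) = (A.br x y z, ψ x y z)) ∧
      IsDer B (LinearMap.prod (φL ∘ₗ LinearMap.fst K L M)
        (φM ∘ₗ LinearMap.snd K L M + χ ∘ₗ LinearMap.fst K L M)))
    ↔ ((∀ x y z v w : L,
          ψ x y (A.br z v w)
            = ψ (A.br x y z) v w + ψ z (A.br x y v) w + ψ z v (A.br x y w)) ∧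
        (∀ x y z : L,
          φM (ψ x y z) + χ (A.br x y z)
            = ψ (φL x) y z + ψ x (φL y) z + ψ x y (φL z))) := by
  constructor
  · rintro ⟨B, hB, hder⟩
    exact ⟨fund_cocycle_of_br_mk_eq B hB,
      ((isDer_prod_iff_of_br_mk_eq B hB φL φM χ).1 hder).2⟩
  · rintro ⟨hψ, hχ⟩
    let B := A.extension ψ hψ₁₂ hψ₂₃ hψ
    have hB : ∀ (x y z : L) (m n p : M), B.br (x, m) (y, n) (z, p) = (A.br x y z, ψ x y z) :=
      fun _ _ _ _ _ _ => rfl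
    exact ⟨B, hB, (isDer_prod_iff_of_br_mk_eq B hB φL φM χ).2 ⟨hφL, hχ⟩⟩
end

section
/- If two sections s₁, s₂ of a central extension of the 3-LieDer pair (L, φ_L) by abelian (M, φ_M) give rise to cocycles (ψ, χ) and (ψ', χ'), then (ψ, χ) - (ψ', χ') = ∂u where u(x) = s₁(x) - s₂(x), i.e., ψ(x,y,z) - ψ'(x,y,z) = -u([x,y,z]) and χ(x) - χ'(x) = φ_M(u(x)) - u(φ_L(x)). Hence the cohomology class of (ψ, χ) is independent of the section. -/
/-- two sections of a central extension of 3-LieDer pairs give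
cocycles differing by the coboundary of `u = s₁ - s₂` (an `M`-valued map, via the
identification `i`); hence the cohomology class is independent of the section. -/
theorem cocycle_independent_of_section
    (K L M E : Type) [Field K] [AddCommGroup L] [Module K L]
    [AddCommGroup M] [Module K M] [AddCommGroup E] [Module K E]
    (A : ThreeLieAlgebra K L) (φL : L →ₗ[K] L) (hφL : IsDer A φL)
    (φM : M →ₗ[K] M)
    (AE : ThreeLieAlgebra K E) (φE : E →ₗ[K] E) (hφE : IsDer AE φE)
    (i : M →ₗ[K] E) (p : E →ₗ[K] L)
    (hinj : Function.Injective i) (hsurj : Function.Surjective p)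
    (hexact : LinearMap.range i = LinearMap.ker p)
    (hmorph : ∀ a b c, p (AE.br a b c) = A.br (p a) (p b) (p c))
    (hcentral : ∀ (m : M) (a b : E), AE.br (i m) a b = 0)
    (hpφ : ∀ e, p (φE e) = φL (p e))
    (hiφ : ∀ m, φE (i m) = i (φM m))
    (s₁ s₂ : L →ₗ[K] E) (hs₁ : ∀ x, p (s₁ x) = x) (hs₂ : ∀ x, p (s₂ x) = x)
    (u : L →ₗ[K] M) (hu : ∀ x, i (u x) = s₁ x - s₂ x) :
    (∀ x y z : L,
      (AE.br (s₁ x) (s₁ y) (s₁ z) - s₁ (A.br x y z))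
        - (AE.br (s₂ x) (s₂ y) (s₂ z) - s₂ (A.br x y z))
        = - i (u (A.br x y z))) ∧
    (∀ x : L,
      (φE (s₁ x) - s₁ (φL x)) - (φE (s₂ x) - s₂ (φL x))
        = i (φM (u x) - u (φL x))) := by
  have hc2 : ∀ (m : M) (a b : E), AE.br a (i m) b = 0 := by
    intro m a b
    have h := (AE.skew₁₂ (i m) a b).symm
    rw [hcentral] at h
    simpa using h.symm
  have hc3 : ∀ (m : M) (a b : E), AE.br a b (i m) = 0 := by
    intro m a b
    have h := AE.skew₂₃ a (i m) b
    rw [hc2] at h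
    simpa using h.symm
  have hs : ∀ x, s₁ x = s₂ x + i (u x) := by
    intro x
    rw [hu x]; abel
  constructor
  · intro x y z
    have hbr : AE.br (s₁ x) (s₁ y) (s₁ z) = AE.br (s₂ x) (s₂ y) (s₂ z) := by
      rw [hs x, hs y, hs z]
      simp [map_add, hcentral, hc2, hc3]
    rw [hbr, hs (A.br x y z)]
    abel
  · intro x
    have h1 : φE (s₁ x) = φE (s₂ x) + i (φM (u x)) := by
      rw [hs x, map_add, hiφ]
    rw [h1, hs (φL x), map_sub]
    abel
end

section
/- Let 0 → M → L̂ → L → 0 be a central extension of 3-Lie algebras with section s, and let (φ_L, φ_M) ∈ Der(L) × Der(M). Define ψ(x,y,z) = [s(x),s(y),s(z)] - s([x,y,z]) and Ob(x,y,z) = φ_M(ψ(x,y,z)) - ψ(φ_L(x),y,z) - ψ(x,φ_L(y),z) - ψ(x,y,φ_L(z)). Then Ob is a 2-cocycle for L with coefficients in the trivial representation M, i.e., Ob(x,y,[u,v,w]) = Ob([x,y,u],v,w) + Ob(u,[x,y,v],w) + Ob(u,v,[x,y,w]). -/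
/-- given a central extension `0 → M → Ê → L → 0` of 3-Lie algebras
with section `s`, a pair of derivations `(φ_L, φ_M)` and the `M`-valued 2-cochain
`ψ(x,y,z) = [s x, s y, s z] - s [x,y,z]`, the obstruction cochain
`Ob(x,y,z) = φ_M(ψ(x,y,z)) - ψ(φ_L x,y,z) - ψ(x,φ_L y,z) - ψ(x,y,φ_L z)`
is a 2-cocycle for `L` with trivial coefficients in `M`. -/
theorem obstruction_is_two_cocycle
    (K L M E : Type) [Field K] [AddCommGroup L] [Module K L]
    [AddCommGroup M] [Module K M] [AddCommGroup E] [Module K E]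
    (A : ThreeLieAlgebra K L) (AE : ThreeLieAlgebra K E)
    (i : M →ₗ[K] E) (p : E →ₗ[K] L)
    (hinj : Function.Injective i) (hsurj : Function.Surjective p)
    (hexact : LinearMap.range i = LinearMap.ker p)
    (hmorph : ∀ a b c, p (AE.br a b c) = A.br (p a) (p b) (p c))
    (hcentral : ∀ (m : M) (a b : E), AE.br (i m) a b = 0)
    (s : L →ₗ[K] E) (hs : ∀ x, p (s x) = x)
    (φL : L →ₗ[K] L) (hφL : IsDer A φL) (φM : M →ₗ[K] M)
    (ψ : L → L → L → M)
    (hψ : ∀ x y z, i (ψ x y z) = AE.br (s x) (s y) (s z) - s (A.br x y z)) :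
    ∀ x y u v w : L,
      (fun a b c => φM (ψ a b c) - ψ (φL a) b c - ψ a (φL b) c - ψ a b (φL c))
          x y (A.br u v w)
        = (fun a b c => φM (ψ a b c) - ψ (φL a) b c - ψ a (φL b) c - ψ a b (φL c))
            (A.br x y u) v w
          + (fun a b c => φM (ψ a b c) - ψ (φL a) b c - ψ a (φL b) c - ψ a b (φL c))
              u (A.br x y v) w
          + (fun a b c => φM (ψ a b c) - ψ (φL a) b c - ψ a (φL b) c - ψ a b (φL c))
              u v (A.br x y w) := by
  -- centrality in all three slots
  have hc2 : ∀ (a : E) (m : M) (b : E), AE.br a (i m) b = 0 := by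
    intro a m b; rw [AE.skew₁₂, hcentral, neg_zero]
  have hc3 : ∀ (a b : E) (m : M), AE.br a b (i m) = 0 := by
    intro a b m; rw [AE.skew₂₃, hc2, neg_zero]
  -- additivity of ψ in each slot
  have hadd1 : ∀ a b y z, ψ (a + b) y z = ψ a y z + ψ b y z := by
    intro a b y z; apply hinj
    simp only [map_add, hψ, LinearMap.add_apply]
    abel
  have hadd2 : ∀ x a b z, ψ x (a + b) z = ψ x a z + ψ x b z := by
    intro x a b z; apply hinj
    simp only [map_add, hψ, LinearMap.add_apply]
    abel
  have hadd3 : ∀ x y a b, ψ x y (a + b) = ψ x y a + ψ x y b := by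
    intro x y a b; apply hinj
    simp only [map_add, hψ, LinearMap.add_apply]
    abel
  -- s of a bracket, in terms of the bracket of sections
  have hs' : ∀ a b c, s (A.br a b c) = AE.br (s a) (s b) (s c) - i (ψ a b c) := by
    intro a b c; rw [hψ]; abel
  -- ψ is a 2-cocycle
  have hcoc : ∀ x y u v w, ψ x y (A.br u v w)
      = ψ (A.br x y u) v w + ψ u (A.br x y v) w + ψ u v (A.br x y w) := by
    intro x y u v w
    apply hinj
    rw [map_add, map_add, hψ, hψ, hψ, hψ]
    rw [hs' u v w, map_sub, hc3, sub_zero, AE.fund]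
    rw [hs' x y u, hs' x y v, hs' x y w]
    simp only [map_sub, LinearMap.sub_apply, hcentral, hc2, hc3, sub_zero]
    rw [A.fund, map_add, map_add]
    abel
  intro x y u v w
  simp only []
  rw [hcoc x y u v w, map_add, map_add,
      hcoc (φL x) y u v w, hcoc x (φL y) u v w,
      hφL u v w, hadd3 x y, hadd3 x y,
      hcoc x y (φL u) v w, hcoc x y u (φL v) w, hcoc x y u v (φL w),
      hφL x y u, hadd1, hadd1,
      hφL x y v, hadd2, hadd2,
      hφL x y w, hadd3 u v, hadd3 u v]
  abel
end

section
/- A pair of derivations (φ_L, φ_M) ∈ Der(L) × Der(M) is extensible to a derivation φ_{L̂} of the central extension L̂ making 0 → (M,φ_M) → (L̂,φ_{L̂}) → (L,φ_L) → 0 exact as 3-LieDer pairs if and only if the obstruction class [Ob] ∈ H²(L, M) is trivial. -/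
/-- a pair of derivations `(φ_L, φ_M)` is extensible to a derivation
`φ_Ê` of a central extension, compatible with the inclusion and projection, if and
only if the obstruction class `[Ob] ∈ H²(L, M)` is trivial, i.e. `Ob` is the
coboundary `∂λ : (x,y,z) ↦ -λ([x,y,z])` of some linear `λ : L → M`. -/
theorem extensible_iff_obstruction_trivial
    (K L M E : Type) [Field K] [AddCommGroup L] [Module K L]
    [AddCommGroup M] [Module K M] [AddCommGroup E] [Module K E]
    (A : ThreeLieAlgebra K L) (AE : ThreeLieAlgebra K E)
    (i : M →ₗ[K] E) (p : E →ₗ[K] L)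
    (hinj : Function.Injective i) (hsurj : Function.Surjective p)
    (hexact : LinearMap.range i = LinearMap.ker p)
    (hmorph : ∀ a b c, p (AE.br a b c) = A.br (p a) (p b) (p c))
    (hcentral : ∀ (m : M) (a b : E), AE.br (i m) a b = 0)
    (s : L →ₗ[K] E) (hs : ∀ x, p (s x) = x)
    (φL : L →ₗ[K] L) (hφL : IsDer A φL) (φM : M →ₗ[K] M)
    (ψ : L → L → L → M)
    (hψ : ∀ x y z, i (ψ x y z) = AE.br (s x) (s y) (s z) - s (A.br x y z)) :
    (∃ φE : E →ₗ[K] E, IsDer AE φE ∧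
        (∀ m, φE (i m) = i (φM m)) ∧ (∀ e, p (φE e) = φL (p e)))
    ↔ (∃ lam : L →ₗ[K] M, ∀ x y z : L,
        φM (ψ x y z) - ψ (φL x) y z - ψ x (φL y) z - ψ x y (φL z)
          = - lam (A.br x y z)) := by
  obtain ⟨l, hl⟩ := i.exists_leftInverse_of_injective (LinearMap.ker_eq_bot.mpr hinj)
  have hli : ∀ m, l (i m) = m := fun m => LinearMap.congr_fun hl m
  have hpi : ∀ m, p (i m) = 0 := by
    intro m
    have : i m ∈ LinearMap.ker p := hexact ▸ LinearMap.mem_range_self i m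
    exact this
  have hil : ∀ e, p e = 0 → i (l e) = e := by
    intro e he
    obtain ⟨m, hm⟩ := hexact.symm ▸ (LinearMap.mem_ker.mpr he)
    rw [← hm, hli]
  have cent2 : ∀ (m : M) (a b : E), AE.br a (i m) b = 0 := by
    intro m a b; rw [AE.skew₁₂, hcentral, neg_zero]
  have cent3 : ∀ (m : M) (a b : E), AE.br a b (i m) = 0 := by
    intro m a b; rw [AE.skew₂₃, cent2, neg_zero]
  have add1 : ∀ (u v b c : E), AE.br (u + v) b c = AE.br u b c + AE.br v b c := by
    intro u v b c; rw [map_add]; rfl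
  have add2 : ∀ (a u v c : E), AE.br a (u + v) c = AE.br a u c + AE.br a v c := by
    intro a u v c; rw [map_add]; rfl
  have add3 : ∀ (a b u v : E), AE.br a b (u + v) = AE.br a b u + AE.br a b v := by
    intro a b u v; exact map_add _ u v
  constructor
  · rintro ⟨φE, hder, hφi, hφp⟩
    refine ⟨l ∘ₗ (φE ∘ₗ s - s ∘ₗ φL), fun x y z => ?_⟩
    apply hinj
    have key : ∀ x, i ((l ∘ₗ (φE ∘ₗ s - s ∘ₗ φL)) x) = φE (s x) - s (φL x) := by
      intro x
      show i (l (φE (s x) - s (φL x))) = _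
      exact hil _ (by rw [map_sub, hφp, hs, hs, sub_self])
    have hes : ∀ x, φE (s x) = s (φL x) + i ((l ∘ₗ (φE ∘ₗ s - s ∘ₗ φL)) x) := by
      intro x; rw [key]; abel
    -- compute i applied to both sides
    have lhs₁ : i (φM (ψ x y z)) = φE (AE.br (s x) (s y) (s z)) - φE (s (A.br x y z)) := by
      rw [← hφi, hψ, map_sub]
    have e1 : φE (AE.br (s x) (s y) (s z))
        = AE.br (s (φL x)) (s y) (s z) + AE.br (s x) (s (φL y)) (s z)
          + AE.br (s x) (s y) (s (φL z)) := by
      rw [hder, hes x, hes y, hes z, add1, add2, add3, hcentral, cent2, cent3]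
      abel
    have e2 : φE (s (A.br x y z))
        = s (A.br (φL x) y z + A.br x (φL y) z + A.br x y (φL z))
          + i ((l ∘ₗ (φE ∘ₗ s - s ∘ₗ φL)) (A.br x y z)) := by
      rw [hes (A.br x y z), hφL x y z]
    have h1 := hψ (φL x) y z
    have h2 := hψ x (φL y) z
    have h3 := hψ x y (φL z)
    rw [map_sub, map_sub, map_sub, map_neg, lhs₁, e1, e2, h1, h2, h3, map_add, map_add]
    abel
  · rintro ⟨lam, hlam⟩
    set r : E →ₗ[K] M := l ∘ₗ (LinearMap.id - s ∘ₗ p) with hr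
    have hir : ∀ e, i (r e) = e - s (p e) := by
      intro e
      show i (l (e - s (p e))) = _
      exact hil _ (by rw [map_sub, hs, sub_self])
    set φE : E →ₗ[K] E := s ∘ₗ φL ∘ₗ p + i ∘ₗ φM ∘ₗ r + i ∘ₗ lam ∘ₗ p with hφE
    have hφEapp : ∀ e, φE e = s (φL (p e)) + i (φM (r e)) + i (lam (p e)) := fun e => rfl
    have hri : ∀ m, r (i m) = m := by
      intro m; apply hinj; rw [hir, hpi, map_zero, sub_zero]
    have hrs : ∀ x, r (s x) = 0 := by
      intro x; apply hinj; rw [hir, hs, sub_self, map_zero]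
    have hcomm : ∀ m, φE (i m) = i (φM m) := by
      intro m; rw [hφEapp, hpi, hri, map_zero, map_zero, map_zero, map_zero]; abel
    have hproj : ∀ e, p (φE e) = φL (p e) := by
      intro e; rw [hφEapp, map_add, map_add, hpi, hpi, hs, add_zero, add_zero]
    have hφEs : ∀ x, φE (s x) = s (φL x) + i (lam x) := by
      intro x; rw [hφEapp, hs, hrs, map_zero, map_zero, add_zero]
    -- decomposition of arbitrary elements
    have hdec : ∀ e : E, e = i (r e) + s (p e) := by
      intro e; rw [hir]; abel
    have decomp : ∀ a b c : E,
        AE.br a b c = i (ψ (p a) (p b) (p c)) + s (A.br (p a) (p b) (p c)) := by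
      intro a b c
      have h1 : AE.br a b c = AE.br (s (p a)) (s (p b)) (s (p c)) := by
        conv_lhs => rw [hdec a, hdec b, hdec c]
        simp only [add1, add2, add3, hcentral, cent2, cent3, zero_add, add_zero]
      rw [h1, hψ]; abel
    refine ⟨φE, fun a b c => ?_, hcomm, hproj⟩
    have hBL : p (AE.br a b c) = A.br (p a) (p b) (p c) := hmorph a b c
    -- left side
    have lhs : φE (AE.br a b c)
        = i (φM (ψ (p a) (p b) (p c))) + s (φL (A.br (p a) (p b) (p c)))
          + i (lam (A.br (p a) (p b) (p c))) := by
      rw [decomp a b c, map_add, hcomm, hφEs]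
      abel
    -- right side pieces
    have piece : ∀ u b c : E, AE.br (φE u) b c
        = i (ψ (φL (p u)) (p b) (p c)) + s (A.br (φL (p u)) (p b) (p c)) := by
      intro u b c
      have : AE.br (φE u) b c = AE.br (s (φL (p u))) (s (p b)) (s (p c)) := by
        rw [hφEapp u]
        conv_lhs => rw [hdec b, hdec c]
        simp only [add1, add2, add3, hcentral, cent2, cent3, zero_add, add_zero]
      rw [this, hψ]; abel
    have piece2 : ∀ a u c : E, AE.br a (φE u) c
        = i (ψ (p a) (φL (p u)) (p c)) + s (A.br (p a) (φL (p u)) (p c)) := by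
      intro a u c
      have : AE.br a (φE u) c = AE.br (s (p a)) (s (φL (p u))) (s (p c)) := by
        rw [hφEapp u]
        conv_lhs => rw [hdec a, hdec c]
        simp only [add1, add2, add3, hcentral, cent2, cent3, zero_add, add_zero]
      rw [this, hψ]; abel
    have piece3 : ∀ a b u : E, AE.br a b (φE u)
        = i (ψ (p a) (p b) (φL (p u))) + s (A.br (p a) (p b) (φL (p u))) := by
      intro a b u
      have : AE.br a b (φE u) = AE.br (s (p a)) (s (p b)) (s (φL (p u))) := by
        rw [hφEapp u]
        conv_lhs => rw [hdec a, hdec b]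
        simp only [add1, add2, add3, hcentral, cent2, cent3, zero_add, add_zero]
      rw [this, hψ]; abel
    rw [lhs, piece, piece2, piece3]
    have hM := hlam (p a) (p b) (p c)
    have hM' : φM (ψ (p a) (p b) (p c)) + lam (A.br (p a) (p b) (p c))
        = ψ (φL (p a)) (p b) (p c) + ψ (p a) (φL (p b)) (p c)
          + ψ (p a) (p b) (φL (p c)) := by
      calc φM (ψ (p a) (p b) (p c)) + lam (A.br (p a) (p b) (p c))
          = (φM (ψ (p a) (p b) (p c)) - ψ (φL (p a)) (p b) (p c)
              - ψ (p a) (φL (p b)) (p c) - ψ (p a) (p b) (φL (p c)))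
            + (ψ (φL (p a)) (p b) (p c) + ψ (p a) (φL (p b)) (p c)
              + ψ (p a) (p b) (φL (p c))) + lam (A.br (p a) (p b) (p c)) := by abel
        _ = -lam (A.br (p a) (p b) (p c))
            + (ψ (φL (p a)) (p b) (p c) + ψ (p a) (φL (p b)) (p c)
              + ψ (p a) (p b) (φL (p c))) + lam (A.br (p a) (p b) (p c)) := by rw [hM]
        _ = _ := by abel
    have hMi : i (φM (ψ (p a) (p b) (p c))) + i (lam (A.br (p a) (p b) (p c)))
        = i (ψ (φL (p a)) (p b) (p c)) + i (ψ (p a) (φL (p b)) (p c))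
          + i (ψ (p a) (p b) (φL (p c))) := by
      rw [← map_add, ← map_add, ← map_add, hM']
    have hsL : s (φL (A.br (p a) (p b) (p c)))
        = s (A.br (φL (p a)) (p b) (p c)) + s (A.br (p a) (φL (p b)) (p c))
          + s (A.br (p a) (p b) (φL (p c))) := by
      rw [hφL, map_add, map_add]
    rw [hsL]
    calc i (φM (ψ (p a) (p b) (p c)))
          + (s (A.br (φL (p a)) (p b) (p c)) + s (A.br (p a) (φL (p b)) (p c))
            + s (A.br (p a) (p b) (φL (p c))))
          + i (lam (A.br (p a) (p b) (p c)))
        = (i (φM (ψ (p a) (p b) (p c))) + i (lam (A.br (p a) (p b) (p c))))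
          + (s (A.br (φL (p a)) (p b) (p c)) + s (A.br (p a) (φL (p b)) (p c))
            + s (A.br (p a) (p b) (φL (p c)))) := by abel
      _ = _ := by rw [hMi]; abel
end

section
/- If H²(L, M) = 0 for the trivial representation, then any pair of derivations (φ_L, φ_M) ∈ Der(L) × Der(M) extends to a derivation of the central extension L̂ compatible with the inclusion and projection. -/
/-- if `H²(L, M) = 0` (every skew 2-cocycle with trivial coefficients
is a coboundary), then any pair of derivations `(φ_L, φ_M)` extends to a derivation
of the central extension compatible with the inclusion and projection. -/
theorem pair_of_derivations_extensible_of_H2_zero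
    (K L M E : Type) [Field K] [AddCommGroup L] [Module K L]
    [AddCommGroup M] [Module K M] [AddCommGroup E] [Module K E]
    (A : ThreeLieAlgebra K L) (AE : ThreeLieAlgebra K E)
    (i : M →ₗ[K] E) (p : E →ₗ[K] L)
    (hinj : Function.Injective i) (hsurj : Function.Surjective p)
    (hexact : LinearMap.range i = LinearMap.ker p)
    (hmorph : ∀ a b c, p (AE.br a b c) = A.br (p a) (p b) (p c))
    (hcentral : ∀ (m : M) (a b : E), AE.br (i m) a b = 0)
    (hH2 : ∀ θ : L →ₗ[K] L →ₗ[K] L →ₗ[K] M,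
      (∀ x y z, θ x y z = - θ y x z) →
      (∀ x y z, θ x y z = - θ x z y) →
      (∀ x y z v w, θ x y (A.br z v w)
          = θ (A.br x y z) v w + θ z (A.br x y v) w + θ z v (A.br x y w)) →
      ∃ lam : L →ₗ[K] M, ∀ x y z, θ x y z = - lam (A.br x y z)) :
    ∀ (φL : L →ₗ[K] L), IsDer A φL → ∀ (φM : M →ₗ[K] M),
      ∃ φE : E →ₗ[K] E, IsDer AE φE ∧
        (∀ m, φE (i m) = i (φM m)) ∧ (∀ e, p (φE e) = φL (p e)) := by
  intro φL hφL φM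
  -- a linear section of p
  obtain ⟨s, hs⟩ := p.exists_rightInverse_of_surjective (LinearMap.range_eq_top.2 hsurj)
  have hps : ∀ x, p (s x) = x := fun x => LinearMap.ext_iff.1 hs x
  have hpi : ∀ m, p (i m) = 0 := by
    intro m
    have : i m ∈ LinearMap.ker p := hexact ▸ LinearMap.mem_range_self i m
    exact this
  let τ : E →ₗ[K] E := LinearMap.id - s ∘ₗ p
  have hτapp : ∀ e, τ e = e - s (p e) := fun _ => rfl
  have hτmem : ∀ e : E, τ e ∈ LinearMap.range i := by
    intro e
    rw [hexact, LinearMap.mem_ker, hτapp]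
    simp [map_sub, hps]
  -- the retraction σ : E → M, i (σ e) = e - s (p e)
  let σ : E →ₗ[K] M :=
    (LinearEquiv.ofInjective i hinj).symm.toLinearMap ∘ₗ
      τ.codRestrict (LinearMap.range i) hτmem
  have hiσ : ∀ e, i (σ e) = e - s (p e) := by
    intro e
    have h1 := (LinearEquiv.ofInjective i hinj).apply_symm_apply
      ⟨τ e, hτmem e⟩
    have h2 := congrArg Subtype.val h1
    rw [← hτapp]
    simpa [σ, LinearEquiv.ofInjective_apply] using h2
  have hσi : ∀ m, σ (i m) = m := by
    intro m
    apply hinj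
    rw [hiσ, hpi, map_zero, sub_zero]
  -- the cocycle θ
  let θ : L →ₗ[K] L →ₗ[K] L →ₗ[K] M :=
    (((AE.br.compr₂ (LinearMap.llcomp K E E M σ)).comp s).compl₂ s).compr₂
      (LinearMap.lcomp K M s)
  have hθapp : ∀ x y z, θ x y z = σ (AE.br (s x) (s y) (s z)) := fun _ _ _ => rfl
  have hiθ : ∀ x y z, i (θ x y z) = AE.br (s x) (s y) (s z) - s (A.br x y z) := by
    intro x y z
    rw [hθapp, hiσ, hmorph, hps, hps, hps]
  have hbrs : ∀ x y z, AE.br (s x) (s y) (s z) = s (A.br x y z) + i (θ x y z) := by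
    intro x y z
    rw [hiθ]
    abel
  -- centrality in each slot
  have hc2 : ∀ (a : E) (m : M) (b : E), AE.br a (i m) b = 0 := by
    intro a m b
    rw [AE.skew₁₂, hcentral, neg_zero]
  have hc3 : ∀ (a b : E) (m : M), AE.br a b (i m) = 0 := by
    intro a b m
    rw [AE.skew₂₃, hc2, neg_zero]
  -- the bracket only depends on projections
  have hdec : ∀ e : E, e = s (p e) + i (σ e) := by
    intro e; rw [hiσ]; abel
  have hred : ∀ a b c : E, AE.br a b c = AE.br (s (p a)) (s (p b)) (s (p c)) := by
    intro a b c
    conv_lhs => rw [hdec a, hdec b, hdec c]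
    simp [map_add, LinearMap.add_apply, hcentral, hc2, hc3]
  -- θ is skew and a cocycle
  have hθ12 : ∀ x y z, θ x y z = - θ y x z := by
    intro x y z
    apply hinj
    rw [map_neg, hiθ, hiθ, AE.skew₁₂ (s x), A.skew₁₂, map_neg]
    abel
  have hθ23 : ∀ x y z, θ x y z = - θ x z y := by
    intro x y z
    apply hinj
    rw [map_neg, hiθ, hiθ, AE.skew₂₃ (s x), A.skew₂₃, map_neg]
    abel
  have hθcoc : ∀ x y z v w, θ x y (A.br z v w)
      = θ (A.br x y z) v w + θ z (A.br x y v) w + θ z v (A.br x y w) := by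
    intro x y z v w
    apply hinj
    have e1 : AE.br (s x) (s y) (s (A.br z v w))
        = AE.br (s x) (s y) (AE.br (s z) (s v) (s w)) := by
      rw [hbrs z v w]; simp [map_add, hc3]
    have e2 : AE.br (s (A.br x y z)) (s v) (s w)
        = AE.br (AE.br (s x) (s y) (s z)) (s v) (s w) := by
      rw [hbrs x y z]; simp [map_add, LinearMap.add_apply, hcentral]
    have e3 : AE.br (s z) (s (A.br x y v)) (s w)
        = AE.br (s z) (AE.br (s x) (s y) (s v)) (s w) := by
      rw [hbrs x y v]; simp [map_add, LinearMap.add_apply, hc2]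
    have e4 : AE.br (s z) (s v) (s (A.br x y w))
        = AE.br (s z) (s v) (AE.br (s x) (s y) (s w)) := by
      rw [hbrs x y w]; simp [map_add, hc3]
    simp only [map_add, hiθ]
    rw [e1, e2, e3, e4, AE.fund, A.fund]
    simp only [map_add]
    abel
  -- the obstruction cocycle ω
  let ω : L →ₗ[K] L →ₗ[K] L →ₗ[K] M :=
    θ.compr₂ (LinearMap.llcomp K L M M φM) - θ.comp φL - θ.compl₂ φL
      - θ.compr₂ (LinearMap.lcomp K M φL)
  have hωapp : ∀ x y z, ω x y z
      = φM (θ x y z) - θ (φL x) y z - θ x (φL y) z - θ x y (φL z) := fun _ _ _ => rfl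
  have hω12 : ∀ x y z, ω x y z = - ω y x z := by
    intro x y z
    rw [hωapp, hωapp, hθ12 x y z, hθ12 (φL x) y z, hθ12 x (φL y) z, hθ12 x y (φL z),
      map_neg]
    abel
  have hω23 : ∀ x y z, ω x y z = - ω x z y := by
    intro x y z
    rw [hωapp, hωapp, hθ23 x y z, hθ23 (φL x) y z, hθ23 x (φL y) z, hθ23 x y (φL z),
      map_neg]
    abel
  have hωcoc : ∀ x y z v w, ω x y (A.br z v w)
      = ω (A.br x y z) v w + ω z (A.br x y v) w + ω z v (A.br x y w) := by
    intro x y z v w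
    simp only [hωapp]
    rw [hφL z v w, hφL x y z, hφL x y v, hφL x y w]
    simp only [map_add, LinearMap.add_apply]
    rw [hθcoc x y z v w, hθcoc (φL x) y z v w, hθcoc x (φL y) z v w,
      hθcoc x y (φL z) v w, hθcoc x y z (φL v) w, hθcoc x y z v (φL w)]
    simp only [map_add]
    abel
  obtain ⟨lam, hlam⟩ := hH2 ω hω12 hω23 hωcoc
  -- the extended derivation
  let φE : E →ₗ[K] E := s ∘ₗ (φL ∘ₗ p) + i ∘ₗ (φM ∘ₗ σ) + i ∘ₗ (lam ∘ₗ p)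
  have hφEapp : ∀ e, φE e = s (φL (p e)) + i (φM (σ e)) + i (lam (p e)) := by
    intro e
    simp only [φE, LinearMap.add_apply, LinearMap.comp_apply]
  have hpφE : ∀ e, p (φE e) = φL (p e) := by
    intro e
    rw [hφEapp]
    simp [map_add, hps, hpi]
  refine ⟨φE, ?_, ?_, ?_⟩
  · intro a b c
    have hσbr : σ (AE.br a b c) = θ (p a) (p b) (p c) := by
      apply hinj
      rw [hiσ, hmorph, hred a b c, hbrs]
      simp [map_add, hps, hpi]
    -- left-hand side
    have hL : φE (AE.br a b c)
        = s (φL (A.br (p a) (p b) (p c))) + i (φM (θ (p a) (p b) (p c)))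
          + i (lam (A.br (p a) (p b) (p c))) := by
      rw [hφEapp, hσbr, hmorph]
    -- right-hand side terms
    have hR1 : AE.br (φE a) b c
        = s (A.br (φL (p a)) (p b) (p c)) + i (θ (φL (p a)) (p b) (p c)) := by
      rw [hred (φE a) b c, hpφE, hbrs]
    have hR2 : AE.br a (φE b) c
        = s (A.br (p a) (φL (p b)) (p c)) + i (θ (p a) (φL (p b)) (p c)) := by
      rw [hred a (φE b) c, hpφE, hbrs]
    have hR3 : AE.br a b (φE c)
        = s (A.br (p a) (p b) (φL (p c))) + i (θ (p a) (p b) (φL (p c))) := by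
      rw [hred a b (φE c), hpφE, hbrs]
    have hkey : lam (A.br (p a) (p b) (p c))
        = θ (φL (p a)) (p b) (p c) + θ (p a) (φL (p b)) (p c)
          + θ (p a) (p b) (φL (p c)) - φM (θ (p a) (p b) (p c)) := by
      have h := hlam (p a) (p b) (p c)
      rw [hωapp] at h
      have h2 := congrArg Neg.neg h
      rw [neg_neg] at h2
      rw [← h2]
      abel
    have hilam : i (lam (A.br (p a) (p b) (p c)))
        = i (θ (φL (p a)) (p b) (p c)) + i (θ (p a) (φL (p b)) (p c))
          + i (θ (p a) (p b) (φL (p c))) - i (φM (θ (p a) (p b) (p c))) := by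
      rw [hkey]
      simp only [map_add, map_sub]
    rw [hL, hR1, hR2, hR3, hilam, hφL (p a) (p b) (p c)]
    simp only [map_add]
    abel
  · intro m
    rw [hφEapp]
    simp [hσi, hpi]
  · exact hpφE
end

section
/- If (μ_t, φ_t) and (μ'_t, φ'_t) are equivalent formal deformations of a 3-LieDer pair (L, φ_L) via Φ_t = Id + tΦ_1 + ..., then their infinitesimals are cohomologous: (μ_1, φ_1) - (μ'_1, φ'_1) = ∂Φ_1, explicitly μ_1(x,y,z) - μ'_1(x,y,z) = [Φ_1(x),y,z] + [x,Φ_1(y),z] + [x,y,Φ_1(z)] - Φ_1([x,y,z]) and φ_1 - φ'_1 = φ_L ∘ Φ_1 - Φ_1 ∘ φ_L (up to sign conventions). -/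
/-- The degree-`n` component of the 3-Lie deformation equation for a family `μ`. -/
def DeformEq {K L : Type} [Field K] [AddCommGroup L] [Module K L]
    (μ : ℕ → (L →ₗ[K] L →ₗ[K] L →ₗ[K] L)) (n : ℕ) : Prop :=
  ∀ x y z v w : L,
    ∑ ij ∈ Finset.HasAntidiagonal.antidiagonal n, μ ij.1 x y (μ ij.2 z v w)
      = ∑ ij ∈ Finset.HasAntidiagonal.antidiagonal n,
          (μ ij.1 (μ ij.2 x y z) v w + μ ij.1 z (μ ij.2 x y v) w
            + μ ij.1 z v (μ ij.2 x y w))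

/-- The degree-`n` component of the equation saying `φ_t` is a derivation for `μ_t`. -/
def DerivEq {K L : Type} [Field K] [AddCommGroup L] [Module K L]
    (μ : ℕ → (L →ₗ[K] L →ₗ[K] L →ₗ[K] L)) (φ : ℕ → (L →ₗ[K] L)) (n : ℕ) : Prop :=
  ∀ x y z : L,
    ∑ ij ∈ Finset.HasAntidiagonal.antidiagonal n, φ ij.1 (μ ij.2 x y z)
      = ∑ ij ∈ Finset.HasAntidiagonal.antidiagonal n,
          (μ ij.1 (φ ij.2 x) y z + μ ij.1 x (φ ij.2 y) z + μ ij.1 x y (φ ij.2 z))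

/-- A formal one-parameter deformation `(μ_t = Σ tⁱ μ_i, φ_t = Σ tⁱ φ_i)` of a
3-LieDer pair `(L, φL)`, encoded by its families of coefficients. -/
structure IsFormalDeformation {K L : Type} [Field K] [AddCommGroup L] [Module K L]
    (A : ThreeLieAlgebra K L) (φL : L →ₗ[K] L)
    (μ : ℕ → (L →ₗ[K] L →ₗ[K] L →ₗ[K] L)) (φ : ℕ → (L →ₗ[K] L)) : Prop where
  init_br : μ 0 = A.br
  init_der : φ 0 = φL
  skew₁₂ : ∀ i x y z, μ i x y z = - μ i y x z
  skew₂₃ : ∀ i x y z, μ i x y z = - μ i x z y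
  deform : ∀ n, DeformEq μ n
  deriv : ∀ n, DerivEq μ φ n

/-- An order-`N` one-parameter deformation of a 3-LieDer pair `(L, φL)`. -/
structure IsDeformationOfOrder {K L : Type} [Field K] [AddCommGroup L] [Module K L]
    (N : ℕ) (A : ThreeLieAlgebra K L) (φL : L →ₗ[K] L)
    (μ : ℕ → (L →ₗ[K] L →ₗ[K] L →ₗ[K] L)) (φ : ℕ → (L →ₗ[K] L)) : Prop where
  init_br : μ 0 = A.br
  init_der : φ 0 = φL
  bound : ∀ i, N < i → μ i = 0 ∧ φ i = 0
  skew₁₂ : ∀ i x y z, μ i x y z = - μ i y x z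
  skew₂₃ : ∀ i x y z, μ i x y z = - μ i x z y
  deform : ∀ n ≤ N, DeformEq μ n
  deriv : ∀ n ≤ N, DerivEq μ φ n

open Finset

namespace Finset.Nat

theorem sum_antidiagonal_one {M : Type*} [AddCommMonoid M] (f : ℕ × ℕ → M) :
    ∑ ij ∈ antidiagonal 1, f ij = f (0, 1) + f (1, 0) := by
  rw [sum_antidiagonal_succ, antidiagonal_zero, sum_singleton]

end Finset.Nat

section DegreeOne

variable {R L : Type*} [CommSemiring R] [AddCommGroup L] [Module R L]

/-- `h` is the `t¹`-coefficient of `Φ_t ∘ φ_t = φ'_t ∘ Φ_t`. -/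
theorem sub_coeff_one_of_intertwine (φ φ' T : ℕ → (L →ₗ[R] L)) (d : L →ₗ[R] L)
    (hT0 : T 0 = LinearMap.id) (hφ0 : φ 0 = d) (hφ'0 : φ' 0 = d) (x : L)
    (h : ∑ ij ∈ antidiagonal 1, T ij.1 (φ ij.2 x) = ∑ ij ∈ antidiagonal 1, φ' ij.1 (T ij.2 x)) :
    φ 1 x - φ' 1 x = d (T 1 x) - T 1 (d x) := by
  simp only [Finset.Nat.sum_antidiagonal_one, hT0, hφ0, hφ'0, LinearMap.id_apply] at h
  rw [sub_eq_sub_iff_add_eq_add, h]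

/-- `h` is the `t¹`-coefficient of `Φ_t ∘ μ_t = μ'_t ∘ (Φ_t ⊗ Φ_t ⊗ Φ_t)`. -/
theorem sub_coeff_one_of_intertwine₃ (μ μ' : ℕ → (L →ₗ[R] L →ₗ[R] L →ₗ[R] L))
    (T : ℕ → (L →ₗ[R] L)) (β : L →ₗ[R] L →ₗ[R] L →ₗ[R] L)
    (hT0 : T 0 = LinearMap.id) (hμ0 : μ 0 = β) (hμ'0 : μ' 0 = β) (x y z : L)
    (h : ∑ ij ∈ antidiagonal 1, T ij.1 (μ ij.2 x y z)
      = ∑ ij ∈ antidiagonal 1, ∑ kl ∈ antidiagonal ij.2, ∑ mq ∈ antidiagonal kl.2,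
          μ' ij.1 (T kl.1 x) (T mq.1 y) (T mq.2 z)) :
    μ 1 x y z - μ' 1 x y z
      = β (T 1 x) y z + β x (T 1 y) z + β x y (T 1 z) - T 1 (β x y z) := by
  simp only [Finset.Nat.sum_antidiagonal_one, Finset.Nat.antidiagonal_zero, sum_singleton,
    hT0, hμ0, hμ'0, LinearMap.id_apply] at h
  rw [sub_eq_sub_iff_add_eq_add, h]
  abel

end DegreeOne

theorem equivalent_deformations_cohomologous_infinitesimals_general
    (K L : Type) [Field K] [AddCommGroup L] [Module K L]
    (A : ThreeLieAlgebra K L) (φL : L →ₗ[K] L)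
    (μ : ℕ → (L →ₗ[K] L →ₗ[K] L →ₗ[K] L)) (φ : ℕ → (L →ₗ[K] L))
    (hdef : IsFormalDeformation A φL μ φ)
    (μ' : ℕ → (L →ₗ[K] L →ₗ[K] L →ₗ[K] L)) (φ' : ℕ → (L →ₗ[K] L))
    (hdef' : IsFormalDeformation A φL μ' φ')
    (T : ℕ → (L →ₗ[K] L)) (hT0 : T 0 = LinearMap.id)
    (hequiv_br : ∀ (n : ℕ) (x y z : L),
      ∑ ij ∈ Finset.HasAntidiagonal.antidiagonal n, T ij.1 (μ ij.2 x y z)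
        = ∑ ij ∈ Finset.HasAntidiagonal.antidiagonal n, ∑ kl ∈ Finset.HasAntidiagonal.antidiagonal ij.2,
            ∑ mq ∈ Finset.HasAntidiagonal.antidiagonal kl.2,
              μ' ij.1 (T kl.1 x) (T mq.1 y) (T mq.2 z))
    (hequiv_der : ∀ (n : ℕ) (x : L),
      ∑ ij ∈ Finset.HasAntidiagonal.antidiagonal n, T ij.1 (φ ij.2 x)
        = ∑ ij ∈ Finset.HasAntidiagonal.antidiagonal n, φ' ij.1 (T ij.2 x)) :
    (∀ x y z : L,
      μ 1 x y z - μ' 1 x y z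
        = A.br (T 1 x) y z + A.br x (T 1 y) z + A.br x y (T 1 z)
          - T 1 (A.br x y z)) ∧
    (∀ x : L, φ 1 x - φ' 1 x = φL (T 1 x) - T 1 (φL x)) :=
  ⟨fun x y z => sub_coeff_one_of_intertwine₃ μ μ' T A.br hT0 hdef.init_br hdef'.init_br x y z
      (hequiv_br 1 x y z),
    fun x => sub_coeff_one_of_intertwine φ φ' T φL hT0 hdef.init_der hdef'.init_der x
      (hequiv_der 1 x)⟩

/-- equivalent formal deformations of a 3-LieDer pair have
cohomologous infinitesimals: `(μ₁, φ₁) - (μ'₁, φ'₁) = ∂Φ₁`. -/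
theorem equivalent_deformations_cohomologous_infinitesimals
    (K L : Type) [Field K] [AddCommGroup L] [Module K L]
    (A : ThreeLieAlgebra K L) (φL : L →ₗ[K] L) (hφL : IsDer A φL)
    (μ : ℕ → (L →ₗ[K] L →ₗ[K] L →ₗ[K] L)) (φ : ℕ → (L →ₗ[K] L))
    (hdef : IsFormalDeformation A φL μ φ)
    (μ' : ℕ → (L →ₗ[K] L →ₗ[K] L →ₗ[K] L)) (φ' : ℕ → (L →ₗ[K] L))
    (hdef' : IsFormalDeformation A φL μ' φ')
    (T : ℕ → (L →ₗ[K] L)) (hT0 : T 0 = LinearMap.id)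
    (hequiv_br : ∀ (n : ℕ) (x y z : L),
      ∑ ij ∈ Finset.HasAntidiagonal.antidiagonal n, T ij.1 (μ ij.2 x y z)
        = ∑ ij ∈ Finset.HasAntidiagonal.antidiagonal n, ∑ kl ∈ Finset.HasAntidiagonal.antidiagonal ij.2,
            ∑ mq ∈ Finset.HasAntidiagonal.antidiagonal kl.2,
              μ' ij.1 (T kl.1 x) (T mq.1 y) (T mq.2 z))
    (hequiv_der : ∀ (n : ℕ) (x : L),
      ∑ ij ∈ Finset.HasAntidiagonal.antidiagonal n, T ij.1 (φ ij.2 x)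
        = ∑ ij ∈ Finset.HasAntidiagonal.antidiagonal n, φ' ij.1 (T ij.2 x)) :
    (∀ x y z : L,
      μ 1 x y z - μ' 1 x y z
        = A.br (T 1 x) y z + A.br x (T 1 y) z + A.br x y (T 1 z)
          - T 1 (A.br x y z)) ∧
    (∀ x : L, φ 1 x - φ' 1 x = φL (T 1 x) - T 1 (φL x)) :=
  equivalent_deformations_cohomologous_infinitesimals_general K L A φL μ φ hdef μ' φ' hdef' T hT0
    hequiv_br hequiv_der
end

section
/- Let (μ_t = Σ_{i=0}^N tⁱμ_i, φ_t = Σ_{i=0}^N tⁱφ_i) be an order-N deformation of the 3-LieDer pair (L, φ_L). Define Ob³ = -½ Σ_{i+j=N+1, i,j>0} [μ_i, μ_j] and Ob² = -Σ_{i+j=N+1, i,j>0} [φ_i, μ_j] (graded Lie brackets on cochains). Then (Ob³, Ob²) is a 3-cocycle: ∂(Ob³, Ob²) = 0 in C³_{3-LieDer}(L, L). -/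
/-- `Cochain L M n` models `C^{n+1}(L,M) = Hom((∧²L)^{⊗ n} ⊗ L, M)` as raw maps:
`n` wedge-pair slots plus one final slot. -/
abbrev Cochain (L M : Type) (n : ℕ) : Type := (Fin n → L × L) → L → M

/-- The genuine (multilinear, alternating in each pair) cochain condition. -/
def IsCochain (K : Type) [Field K] {L M : Type} [AddCommGroup L] [Module K L]
    [AddCommGroup M] [Module K M] {n : ℕ} (f : Cochain L M n) : Prop :=
  (∀ (X : Fin n → L × L) (j : Fin n) (a a' y : L) (z : L),
      f (Function.update X j (a + a', y)) z
        = f (Function.update X j (a, y)) z + f (Function.update X j (a', y)) z) ∧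
  (∀ (X : Fin n → L × L) (j : Fin n) (c : K) (a y z : L),
      f (Function.update X j (c • a, y)) z = c • f (Function.update X j (a, y)) z) ∧
  (∀ (X : Fin n → L × L) (j : Fin n) (x b b' z : L),
      f (Function.update X j (x, b + b')) z
        = f (Function.update X j (x, b)) z + f (Function.update X j (x, b')) z) ∧
  (∀ (X : Fin n → L × L) (j : Fin n) (c : K) (x b z : L),
      f (Function.update X j (x, c • b)) z = c • f (Function.update X j (x, b)) z) ∧
  (∀ (X : Fin n → L × L) (z z' : L), f X (z + z') = f X z + f X z') ∧
  (∀ (X : Fin n → L × L) (c : K) (z : L), f X (c • z) = c • f X z) ∧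
  (∀ (X : Fin n → L × L) (j : Fin n) (a y z : L),
      f (Function.update X j (a, y)) z = - f (Function.update X j (y, a)) z)

/-- The Rotkiewicz coboundary of 3-Lie algebra cohomology, written for raw cochains. -/
def dCob {L M : Type} [AddCommGroup L] [AddCommGroup M]
    (br : L → L → L → L) (ρ : L → L → M → M) {n : ℕ}
    (f : Cochain L M n) : Cochain L M (n + 1) := fun X z =>
  ((-1 : ℤ) ^ n •
      ρ (X (Fin.last n)).2 z (f (fun i => X i.castSucc) (X (Fin.last n)).1))
  + ((-1 : ℤ) ^ n •
      ρ z (X (Fin.last n)).1 (f (fun i => X i.castSucc) (X (Fin.last n)).2))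
  + (∑ j : Fin (n + 1), (-1 : ℤ) ^ (j : ℕ) •
      ρ (X j).1 (X j).2 (f (fun i => X (j.succAbove i)) z))
  + (∑ j : Fin (n + 1), (-1 : ℤ) ^ ((j : ℕ) + 1) •
      f (fun i => X (j.succAbove i)) (br (X j).1 (X j).2 z))
  + (∑ j : Fin (n + 1), ∑ k : Fin (n + 1),
      if (j : ℕ) < (k : ℕ) then
        (-1 : ℤ) ^ ((j : ℕ) + 1) •
          (f (fun i => (Function.update X k (br (X j).1 (X j).2 (X k).1, (X k).2))
                (j.succAbove i)) z
           + f (fun i => (Function.update X k ((X k).1, br (X j).1 (X j).2 (X k).2))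
                (j.succAbove i)) z)
      else 0)

/-- The operator `δ f = Σᵢ f ∘ (Id ⊗ ⋯ ⊗ φ_L ⊗ ⋯ ⊗ Id) - φ_M ∘ f`. -/
def deltaOp {L M : Type} [AddCommGroup M] (φL : L → L) (φM : M → M) {n : ℕ}
    (f : Cochain L M n) : Cochain L M n := fun X z =>
  (∑ j : Fin n,
      (f (Function.update X j (φL (X j).1, (X j).2)) z
       + f (Function.update X j ((X j).1, φL (X j).2)) z))
  + f X (φL z) - φM (f X z)

/-- The obstruction 3-cochain `Ob³ = -½ Σ_{i+j=N+1, i,j>0} [μ_i, μ_j]`, written out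
concretely on `(x∧y, z∧v, w)`. -/
def Ob3 {K L : Type} [Field K] [AddCommGroup L] [Module K L]
    (μ : ℕ → (L →ₗ[K] L →ₗ[K] L →ₗ[K] L)) (N : ℕ) : Cochain L L 2 :=
  fun X w =>
    ∑ ij ∈ (Finset.HasAntidiagonal.antidiagonal (N + 1)).filter (fun q => q.1 ≠ 0 ∧ q.2 ≠ 0),
      (μ ij.1 (μ ij.2 (X 0).1 (X 0).2 (X 1).1) (X 1).2 w
        + μ ij.1 (X 1).1 (μ ij.2 (X 0).1 (X 0).2 (X 1).2) w
        + μ ij.1 (X 1).1 (X 1).2 (μ ij.2 (X 0).1 (X 0).2 w)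
        - μ ij.1 (X 0).1 (X 0).2 (μ ij.2 (X 1).1 (X 1).2 w))

/-- The obstruction 2-cochain `Ob² = -Σ_{i+j=N+1, i,j>0} [φ_i, μ_j]`, written out
concretely on `(x∧y, z)`. -/
def Ob2 {K L : Type} [Field K] [AddCommGroup L] [Module K L]
    (μ : ℕ → (L →ₗ[K] L →ₗ[K] L →ₗ[K] L)) (φ : ℕ → (L →ₗ[K] L)) (N : ℕ) :
    Cochain L L 1 :=
  fun X z =>
    ∑ ij ∈ (Finset.HasAntidiagonal.antidiagonal (N + 1)).filter (fun q => q.1 ≠ 0 ∧ q.2 ≠ 0),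
      (φ ij.1 (μ ij.2 (X 0).1 (X 0).2 z)
        - μ ij.1 (φ ij.2 (X 0).1) (X 0).2 z
        - μ ij.1 (X 0).1 (φ ij.2 (X 0).2) z
        - μ ij.1 (X 0).1 (X 0).2 (φ ij.2 z))

section Test
variable {L M : Type} [AddCommGroup L] [AddCommGroup M]

set_option maxHeartbeats 1000000 in
lemma dCob_two_eval (br : L → L → L → L) (ρ : L → L → M → M) (f : Cochain L M 2)
    (X : Fin 3 → L × L) (z : L) :
    dCob br ρ f X z =
      ρ (X 2).2 z (f ![X 0, X 1] (X 2).1) + ρ z (X 2).1 (f ![X 0, X 1] (X 2).2)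
      + (ρ (X 0).1 (X 0).2 (f ![X 1, X 2] z) - ρ (X 1).1 (X 1).2 (f ![X 0, X 2] z)
         + ρ (X 2).1 (X 2).2 (f ![X 0, X 1] z))
      + (- f ![X 1, X 2] (br (X 0).1 (X 0).2 z) + f ![X 0, X 2] (br (X 1).1 (X 1).2 z)
         - f ![X 0, X 1] (br (X 2).1 (X 2).2 z))
      + (- (f ![(br (X 0).1 (X 0).2 (X 1).1, (X 1).2), X 2] z
            + f ![((X 1).1, br (X 0).1 (X 0).2 (X 1).2), X 2] z)
         - (f ![X 1, (br (X 0).1 (X 0).2 (X 2).1, (X 2).2)] z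
            + f ![X 1, ((X 2).1, br (X 0).1 (X 0).2 (X 2).2)] z)
         + (f ![X 0, (br (X 1).1 (X 1).2 (X 2).1, (X 2).2)] z
            + f ![X 0, ((X 2).1, br (X 1).1 (X 1).2 (X 2).2)] z)) := by
  have e1 : (fun i : Fin 2 => X i.castSucc) = ![X 0, X 1] := by
    funext i; fin_cases i <;> rfl
  have e2 : ∀ (Y : Fin 3 → L × L), (fun i : Fin 2 => Y ((0 : Fin 3).succAbove i)) = ![Y 1, Y 2] := by
    intro Y; funext i; fin_cases i <;> rfl
  have e3 : ∀ (Y : Fin 3 → L × L), (fun i : Fin 2 => Y ((1 : Fin 3).succAbove i)) = ![Y 0, Y 2] := by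
    intro Y; funext i; fin_cases i <;> rfl
  have e4 : ∀ (Y : Fin 3 → L × L), (fun i : Fin 2 => Y ((2 : Fin 3).succAbove i)) = ![Y 0, Y 1] := by
    intro Y; funext i; fin_cases i <;> rfl
  have sum3 : ∀ g : Fin (2+1) → M, (∑ j, g j) = g 0 + g 1 + g 2 := fun g => Fin.sum_univ_three g
  have hl : Fin.last 2 = (2 : Fin 3) := rfl
  simp only [dCob, sum3, hl, e2, e3, e4, e1]
  norm_num
  simp only [Function.update_of_ne (show (2:Fin 3) ≠ 1 by decide),
    Function.update_of_ne (show (1:Fin 3) ≠ 2 by decide),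
    Function.update_of_ne (show (0:Fin 3) ≠ 2 by decide),
    Function.update_of_ne (show (0:Fin 3) ≠ 1 by decide), neg_one_zsmul]
  abel

end Test
section Test2
variable {L M : Type} [AddCommGroup L] [AddCommGroup M]

lemma dCob_one_eval (br : L → L → L → L) (ρ : L → L → M → M) (f : Cochain L M 1)
    (X : Fin 2 → L × L) (z : L) :
    dCob br ρ f X z =
      - ρ (X 1).2 z (f ![X 0] (X 1).1) - ρ z (X 1).1 (f ![X 0] (X 1).2)
      + (ρ (X 0).1 (X 0).2 (f ![X 1] z) - ρ (X 1).1 (X 1).2 (f ![X 0] z))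
      + (- f ![X 1] (br (X 0).1 (X 0).2 z) + f ![X 0] (br (X 1).1 (X 1).2 z))
      - (f ![(br (X 0).1 (X 0).2 (X 1).1, (X 1).2)] z
         + f ![((X 1).1, br (X 0).1 (X 0).2 (X 1).2)] z) := by
  have e1 : (fun i : Fin 1 => X i.castSucc) = ![X 0] := by
    funext i; fin_cases i <;> rfl
  have e2 : ∀ (Y : Fin 2 → L × L), (fun i : Fin 1 => Y ((0 : Fin 2).succAbove i)) = ![Y 1] := by
    intro Y; funext i; fin_cases i <;> rfl
  have e3 : ∀ (Y : Fin 2 → L × L), (fun i : Fin 1 => Y ((1 : Fin 2).succAbove i)) = ![Y 0] := by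
    intro Y; funext i; fin_cases i <;> rfl
  have sum2 : ∀ g : Fin (1+1) → M, (∑ j, g j) = g 0 + g 1 := fun g => Fin.sum_univ_two g
  have hl : Fin.last 1 = (1 : Fin 2) := rfl
  simp only [dCob, sum2, hl, e2, e3, e1]
  norm_num
  abel

set_option linter.unusedSectionVars false in
lemma deltaOp_two_eval (φL : L → L) (φM : M → M) (f : Cochain L M 2)
    (X : Fin 2 → L × L) (z : L) :
    deltaOp φL φM f X z =
      (f ![(φL (X 0).1, (X 0).2), X 1] z + f ![((X 0).1, φL (X 0).2), X 1] z
       + (f ![X 0, (φL (X 1).1, (X 1).2)] z + f ![X 0, ((X 1).1, φL (X 1).2)] z))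
      + f X (φL z) - φM (f X z) := by
  have u0 : ∀ v, Function.update X 0 v = ![v, X 1] := by
    intro v; funext i; fin_cases i <;> simp
  have u1 : ∀ v, Function.update X 1 v = ![X 0, v] := by
    intro v; funext i; fin_cases i <;> simp
  simp only [deltaOp, Fin.sum_univ_two, u0, u1]
end Test2


section ObstrGen
variable {K L : Type} [Field K] [AddCommGroup L] [Module K L]

/-- auxiliary: deformation-equation summand. -/
def Dfun (μ : ℕ → (L →ₗ[K] L →ₗ[K] L →ₗ[K] L)) (p q : ℕ) (x y z v w : L) : L :=
  (μ p (μ q x y z) v w + μ p z (μ q x y v) w + μ p z v (μ q x y w)) - μ p x y (μ q z v w)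

/-- auxiliary: derivation-equation summand. -/
def hfun (μ : ℕ → (L →ₗ[K] L →ₗ[K] L →ₗ[K] L)) (φ : ℕ → (L →ₗ[K] L)) (p q : ℕ)
    (x y z : L) : L :=
  φ p (μ q x y z) - (μ p (φ q x) y z + μ p x (φ q y) z + μ p x y (φ q z))

def OpD (μ : ℕ → (L →ₗ[K] L →ₗ[K] L →ₗ[K] L)) (k p q : ℕ) (x1 y1 x2 y2 x3 y3 w : L) : L :=
  μ k y3 w (Dfun μ p q x1 y1 x2 y2 x3)
  + μ k w x3 (Dfun μ p q x1 y1 x2 y2 y3)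
  + μ k x1 y1 (Dfun μ p q x2 y2 x3 y3 w)
  - μ k x2 y2 (Dfun μ p q x1 y1 x3 y3 w)
  + μ k x3 y3 (Dfun μ p q x1 y1 x2 y2 w)
  - Dfun μ p q x2 y2 x3 y3 (μ k x1 y1 w)
  + Dfun μ p q x1 y1 x3 y3 (μ k x2 y2 w)
  - Dfun μ p q x1 y1 x2 y2 (μ k x3 y3 w)
  - Dfun μ p q (μ k x1 y1 x2) y2 x3 y3 w
  - Dfun μ p q x2 (μ k x1 y1 y2) x3 y3 w
  - Dfun μ p q x2 y2 (μ k x1 y1 x3) y3 w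
  - Dfun μ p q x2 y2 x3 (μ k x1 y1 y3) w
  + Dfun μ p q x1 y1 (μ k x2 y2 x3) y3 w
  + Dfun μ p q x1 y1 x3 (μ k x2 y2 y3) w

def OpQ (μ : ℕ → (L →ₗ[K] L →ₗ[K] L →ₗ[K] L)) (φ : ℕ → (L →ₗ[K] L)) (k p q : ℕ)
    (x1 y1 x2 y2 z : L) : L :=
  - μ k y2 z (hfun μ φ p q x1 y1 x2)
  - μ k z x2 (hfun μ φ p q x1 y1 y2)
  + μ k x1 y1 (hfun μ φ p q x2 y2 z)
  - hfun μ φ p q x2 y2 (μ k x1 y1 z)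
  - μ k x2 y2 (hfun μ φ p q x1 y1 z)
  + hfun μ φ p q x1 y1 (μ k x2 y2 z)
  - hfun μ φ p q (μ k x1 y1 x2) y2 z
  - hfun μ φ p q x2 (μ k x1 y1 y2) z
  - Dfun μ p q (φ k x1) y1 x2 y2 z
  - Dfun μ p q x1 (φ k y1) x2 y2 z
  - Dfun μ p q x1 y1 (φ k x2) y2 z
  - Dfun μ p q x1 y1 x2 (φ k y2) z
  - Dfun μ p q x1 y1 x2 y2 (φ k z)
  + φ k (Dfun μ p q x1 y1 x2 y2 z)

def GD1 (μ : ℕ → (L →ₗ[K] L →ₗ[K] L →ₗ[K] L)) (k p q : ℕ) (x1 y1 x2 y2 x3 y3 w : L) : L :=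
  -μ k w x3 (μ p x1 y1 (μ q x2 y2 y3))
       - μ q w x3 (μ k x1 y1 (μ p x2 y2 y3))
       + μ k w x3 (μ p x2 y2 (μ q x1 y1 y3))
       + μ q w x3 (μ k x2 y2 (μ p x1 y1 y3))
       - μ k w x3 (μ p x2 y3 (μ q x1 y1 y2))
       - μ q w x3 (μ k x2 y3 (μ p x1 y1 y2))
       - μ k w x3 (μ p y2 y3 (μ q x1 x2 y1))
       - μ q w x3 (μ k y2 y3 (μ p x1 x2 y1))
       - μ k w y3 (μ p x1 y1 (μ q x2 x3 y2))
       - μ q w y3 (μ k x1 y1 (μ p x2 x3 y2))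
       + μ k w y3 (μ p x2 x3 (μ q x1 y1 y2))
       + μ q w y3 (μ k x2 x3 (μ p x1 y1 y2))
       + μ k w y3 (μ p x2 y2 (μ q x1 x3 y1))
       + μ q w y3 (μ k x2 y2 (μ p x1 x3 y1))
       - μ k w y3 (μ p x3 y2 (μ q x1 x2 y1))
       - μ q w y3 (μ k x3 y2 (μ p x1 x2 y1))
       + μ p w (μ k x1 x3 y1) (μ q x2 y2 y3)
       + μ k w (μ q x1 x3 y1) (μ p x2 y2 y3)
       - μ p w (μ k x1 y1 y3) (μ q x2 x3 y2)
       - μ k w (μ q x1 y1 y3) (μ p x2 x3 y2)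
       + μ k x1 y1 (μ p w x3 (μ q x2 y2 y3))
       + μ q x1 y1 (μ k w x3 (μ p x2 y2 y3))
       + μ k x1 y1 (μ p w y3 (μ q x2 x3 y2))
       + μ q x1 y1 (μ k w y3 (μ p x2 x3 y2))
       - μ k x1 y1 (μ p x2 y2 (μ q w x3 y3))
       - μ q x1 y1 (μ k x2 y2 (μ p w x3 y3))
       + μ k x1 y1 (μ p x3 y3 (μ q w x2 y2))
       + μ q x1 y1 (μ k x3 y3 (μ p w x2 y2))
       - μ k x2 y2 (μ p w x3 (μ q x1 y1 y3))
       - μ q x2 y2 (μ k w x3 (μ p x1 y1 y3))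
       - μ k x2 y2 (μ p w y3 (μ q x1 x3 y1))
       - μ q x2 y2 (μ k w y3 (μ p x1 x3 y1))
       + μ k x2 y2 (μ p x1 y1 (μ q w x3 y3))
       + μ q x2 y2 (μ k x1 y1 (μ p w x3 y3))
       + μ p x2 y2 (μ q x3 y3 (μ k w x1 y1))
       + μ p x2 (μ k w x3 y3) (μ q x1 y1 y2)
       + μ k x2 (μ q w x3 y3) (μ p x1 y1 y2)
       + μ k x3 y3 (μ p w x2 (μ q x1 y1 y2))
       + μ q x3 y3 (μ k w x2 (μ p x1 y1 y2))
       + μ k x3 y3 (μ p w y2 (μ q x1 x2 y1))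
       + μ q x3 y3 (μ k w y2 (μ p x1 x2 y1))
       + μ p x3 y3 (μ q x1 y1 (μ k w x2 y2))
       - μ p x3 y3 (μ q x2 y2 (μ k w x1 y1))
       + μ p x3 (μ k w x1 y1) (μ q x2 y2 y3)
       + μ k x3 (μ q w x1 y1) (μ p x2 y2 y3)
       - μ p x3 (μ k w x2 y2) (μ q x1 y1 y3)
       - μ k x3 (μ q w x2 y2) (μ p x1 y1 y3)
       + μ p y2 (μ k w x3 y3) (μ q x1 x2 y1)
       + μ k y2 (μ q w x3 y3) (μ p x1 x2 y1)
       + μ p y3 (μ k w x1 y1) (μ q x2 x3 y2)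
       + μ k y3 (μ q w x1 y1) (μ p x2 x3 y2)
       - μ p y3 (μ k w x2 y2) (μ q x1 x3 y1)
       - μ k y3 (μ q w x2 y2) (μ p x1 x3 y1)
      

def GD2 (μ : ℕ → (L →ₗ[K] L →ₗ[K] L →ₗ[K] L)) (k p q : ℕ) (x1 y1 x2 y2 x3 y3 w : L) : L :=
  -μ p w x3 (μ k x1 y1 (μ q x2 y2 y3))
       - μ q w x3 (μ p x1 y1 (μ k x2 y2 y3))
       + μ p w x3 (μ k x2 y2 (μ q x1 y1 y3))
       + μ q w x3 (μ p x2 y2 (μ k x1 y1 y3))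
       - μ p w x3 (μ k x2 y3 (μ q x1 y1 y2))
       - μ q w x3 (μ p x2 y3 (μ k x1 y1 y2))
       - μ p w x3 (μ k y2 y3 (μ q x1 x2 y1))
       - μ q w x3 (μ p y2 y3 (μ k x1 x2 y1))
       - μ p w y3 (μ k x1 y1 (μ q x2 x3 y2))
       - μ q w y3 (μ p x1 y1 (μ k x2 x3 y2))
       + μ p w y3 (μ k x2 x3 (μ q x1 y1 y2))
       + μ q w y3 (μ p x2 x3 (μ k x1 y1 y2))
       + μ p w y3 (μ k x2 y2 (μ q x1 x3 y1))
       + μ q w y3 (μ p x2 y2 (μ k x1 x3 y1))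
       - μ p w y3 (μ k x3 y2 (μ q x1 x2 y1))
       - μ q w y3 (μ p x3 y2 (μ k x1 x2 y1))
       + μ k w (μ p x1 x3 y1) (μ q x2 y2 y3)
       - μ k w (μ p x1 y1 y3) (μ q x2 x3 y2)
       + μ p x1 y1 (μ k w x3 (μ q x2 y2 y3))
       + μ q x1 y1 (μ p w x3 (μ k x2 y2 y3))
       + μ p x1 y1 (μ k w y3 (μ q x2 x3 y2))
       + μ q x1 y1 (μ p w y3 (μ k x2 x3 y2))
       - μ p x1 y1 (μ k x2 y2 (μ q w x3 y3))
       - μ q x1 y1 (μ p x2 y2 (μ k w x3 y3))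
       + μ p x1 y1 (μ k x3 y3 (μ q w x2 y2))
       + μ q x1 y1 (μ p x3 y3 (μ k w x2 y2))
       - μ p x2 y2 (μ k w x3 (μ q x1 y1 y3))
       - μ q x2 y2 (μ p w x3 (μ k x1 y1 y3))
       - μ p x2 y2 (μ k w y3 (μ q x1 x3 y1))
       - μ q x2 y2 (μ p w y3 (μ k x1 x3 y1))
       + μ p x2 y2 (μ k x1 y1 (μ q w x3 y3))
       + μ q x2 y2 (μ p x1 y1 (μ k w x3 y3))
       + μ k x2 y2 (μ q x3 y3 (μ p w x1 y1))
       + μ k x2 (μ p w x3 y3) (μ q x1 y1 y2)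
       + μ p x3 y3 (μ k w x2 (μ q x1 y1 y2))
       + μ q x3 y3 (μ p w x2 (μ k x1 y1 y2))
       + μ p x3 y3 (μ k w y2 (μ q x1 x2 y1))
       + μ q x3 y3 (μ p w y2 (μ k x1 x2 y1))
       + μ k x3 y3 (μ q x1 y1 (μ p w x2 y2))
       - μ k x3 y3 (μ q x2 y2 (μ p w x1 y1))
       + μ k x3 (μ p w x1 y1) (μ q x2 y2 y3)
       - μ k x3 (μ p w x2 y2) (μ q x1 y1 y3)
       + μ k y2 (μ p w x3 y3) (μ q x1 x2 y1)
       + μ k y3 (μ p w x1 y1) (μ q x2 x3 y2)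
       - μ k y3 (μ p w x2 y2) (μ q x1 x3 y1)
      

def GQ1 (μ : ℕ → (L →ₗ[K] L →ₗ[K] L →ₗ[K] L)) (φ : ℕ → (L →ₗ[K] L)) (k p q : ℕ) (x1 y1 x2 y2 z : L) : L :=
  φ p (μ q x1 y1 (μ k x2 y2 z))
       - φ p (μ q x2 y2 (μ k x1 y1 z))
       + φ p (μ q x2 z (μ k x1 y1 y2))
       + φ p (μ q y2 z (μ k x1 x2 y1))
       + μ k x1 y1 (φ p (μ q x2 y2 z))
       + μ q x1 y1 (φ k (μ p x2 y2 z))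
       - μ k x1 y1 (μ p x2 y2 (φ q z))
       - μ q x1 y1 (μ k x2 y2 (φ p z))
       + μ k x1 y1 (μ p x2 z (φ q y2))
       + μ q x1 y1 (μ k x2 z (φ p y2))
       - μ k x1 y1 (μ p y2 z (φ q x2))
       - μ q x1 y1 (μ k y2 z (φ p x2))
       - μ p x1 (φ q y1) (μ k x2 y2 z)
       - μ k x1 (φ p y1) (μ q x2 y2 z)
       + μ p x2 y2 (φ q (μ k x1 y1 z))
       + μ k x2 y2 (μ p x1 y1 (φ q z))
       + μ q x2 y2 (μ k x1 y1 (φ p z))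
       - μ k x2 y2 (μ p x1 z (φ q y1))
       - μ q x2 y2 (μ k x1 z (φ p y1))
       + μ k x2 y2 (μ p y1 z (φ q x1))
       + μ q x2 y2 (μ k y1 z (φ p x1))
       + μ k x2 z (φ p (μ q x1 y1 y2))
       + μ q x2 z (φ k (μ p x1 y1 y2))
       - μ k x2 z (μ p x1 y1 (φ q y2))
       - μ q x2 z (μ k x1 y1 (φ p y2))
       + μ k x2 z (μ p x1 y2 (φ q y1))
       + μ q x2 z (μ k x1 y2 (φ p y1))
       - μ k x2 z (μ p y1 y2 (φ q x1))
       - μ q x2 z (μ k y1 y2 (φ p x1))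
       + μ p x2 (φ q y2) (μ k x1 y1 z)
       + μ k x2 (φ p y2) (μ q x1 y1 z)
       - μ p x2 (φ q z) (μ k x1 y1 y2)
       - μ k x2 (φ p z) (μ q x1 y1 y2)
       + μ p y1 (φ q x1) (μ k x2 y2 z)
       + μ k y1 (φ p x1) (μ q x2 y2 z)
       + μ k y2 z (φ p (μ q x1 x2 y1))
       + μ q y2 z (φ k (μ p x1 x2 y1))
       - μ k y2 z (μ p x1 x2 (φ q y1))
       - μ q y2 z (μ k x1 x2 (φ p y1))
       + μ k y2 z (μ p x1 y1 (φ q x2))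
       + μ q y2 z (μ k x1 y1 (φ p x2))
       - μ k y2 z (μ p x2 y1 (φ q x1))
       - μ q y2 z (μ k x2 y1 (φ p x1))
       - μ p y2 (φ q x2) (μ k x1 y1 z)
       - μ k y2 (φ p x2) (μ q x1 y1 z)
       - μ p y2 (φ q z) (μ k x1 x2 y1)
       - μ k y2 (φ p z) (μ q x1 x2 y1)
       + μ p z (φ q x2) (μ k x1 y1 y2)
       + μ k z (φ p x2) (μ q x1 y1 y2)
       + μ p z (φ q y2) (μ k x1 x2 y1)
       + μ k z (φ p y2) (μ q x1 x2 y1)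
      

def GQ2 (μ : ℕ → (L →ₗ[K] L →ₗ[K] L →ₗ[K] L)) (φ : ℕ → (L →ₗ[K] L)) (k p q : ℕ) (x1 y1 x2 y2 z : L) : L :=
  φ k (μ q x1 y1 (μ p x2 y2 z))
       - φ k (μ q x2 y2 (μ p x1 y1 z))
       + φ k (μ q x2 z (μ p x1 y1 y2))
       + φ k (μ q y2 z (μ p x1 x2 y1))
       + μ p x1 y1 (φ k (μ q x2 y2 z))
       + μ q x1 y1 (φ p (μ k x2 y2 z))
       - μ p x1 y1 (μ k x2 y2 (φ q z))
       - μ q x1 y1 (μ p x2 y2 (φ k z))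
       + μ p x1 y1 (μ k x2 z (φ q y2))
       + μ q x1 y1 (μ p x2 z (φ k y2))
       - μ p x1 y1 (μ k y2 z (φ q x2))
       - μ q x1 y1 (μ p y2 z (φ k x2))
       - μ k x1 (φ q y1) (μ p x2 y2 z)
       + μ k x2 y2 (φ q (μ p x1 y1 z))
       + μ p x2 y2 (μ k x1 y1 (φ q z))
       + μ q x2 y2 (μ p x1 y1 (φ k z))
       - μ p x2 y2 (μ k x1 z (φ q y1))
       - μ q x2 y2 (μ p x1 z (φ k y1))
       + μ p x2 y2 (μ k y1 z (φ q x1))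
       + μ q x2 y2 (μ p y1 z (φ k x1))
       + μ p x2 z (φ k (μ q x1 y1 y2))
       + μ q x2 z (φ p (μ k x1 y1 y2))
       - μ p x2 z (μ k x1 y1 (φ q y2))
       - μ q x2 z (μ p x1 y1 (φ k y2))
       + μ p x2 z (μ k x1 y2 (φ q y1))
       + μ q x2 z (μ p x1 y2 (φ k y1))
       - μ p x2 z (μ k y1 y2 (φ q x1))
       - μ q x2 z (μ p y1 y2 (φ k x1))
       + μ k x2 (φ q y2) (μ p x1 y1 z)
       - μ k x2 (φ q z) (μ p x1 y1 y2)
       + μ k y1 (φ q x1) (μ p x2 y2 z)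
       + μ p y2 z (φ k (μ q x1 x2 y1))
       + μ q y2 z (φ p (μ k x1 x2 y1))
       - μ p y2 z (μ k x1 x2 (φ q y1))
       - μ q y2 z (μ p x1 x2 (φ k y1))
       + μ p y2 z (μ k x1 y1 (φ q x2))
       + μ q y2 z (μ p x1 y1 (φ k x2))
       - μ p y2 z (μ k x2 y1 (φ q x1))
       - μ q y2 z (μ p x2 y1 (φ k x1))
       - μ k y2 (φ q x2) (μ p x1 y1 z)
       - μ k y2 (φ q z) (μ p x1 x2 y1)
       + μ k z (φ q x2) (μ p x1 y1 y2)
       + μ k z (φ q y2) (μ p x1 x2 y1)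
      

set_option maxHeartbeats 4000000 in
lemma decompD (μ : ℕ → (L →ₗ[K] L →ₗ[K] L →ₗ[K] L))
    (h12 : ∀ i (x y z : L), μ i x y z = - μ i y x z)
    (h23 : ∀ i (x y z : L), μ i x y z = - μ i x z y)
    (k p q : ℕ) (x1 y1 x2 y2 x3 y3 w : L) :
    OpD μ k p q x1 y1 x2 y2 x3 y3 w
      = GD1 μ k p q x1 y1 x2 y2 x3 y3 w - GD1 μ p k q x1 y1 x2 y2 x3 y3 w
        + (GD2 μ k p q x1 y1 x2 y2 x3 y3 w - GD2 μ k q p x1 y1 x2 y2 x3 y3 w) := by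
  have l12 := h12
  have l23 := h23
  have l13 : ∀ i (a b c : L), μ i a b c = - μ i c b a := by
    intro i a b c; rw [h12 i a b c, h23 i b a c, h12 i b c a]; abel
  have lrot : ∀ i (a b c : L), μ i a b c = μ i b c a := by
    intro i a b c; rw [h12 i a b c, h23 i b a c]; abel
  have lrot2 : ∀ i (a b c : L), μ i a b c = μ i c a b := by
    intro i a b c; rw [h23 i a b c, h12 i a c b]; abel
  simp only [OpD, Dfun, GD1, GD2, map_add, map_sub]

  simp only [l23 q x1 y1 x2,
    l23 q x1 y1 x3,
    l23 q x2 y2 x3,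
    lrot2 q x2 y2 w,
    lrot2 q x3 y3 w,
    lrot2 k x1 y1 w,
    lrot2 q x1 y1 w,
    lrot2 k x2 y2 w,
    lrot2 k x3 y3 w,
    l23 k x1 y1 x2,
    l23 k x1 y1 x3,
    l23 k x2 y2 x3,
    map_neg, LinearMap.neg_apply, neg_neg]

  simp only [l13 p (μ q x1 x2 y1) y2 x3,
    l23 p x2 (μ q x1 y1 y2) x3,
    lrot p (μ q x1 x2 y1) y2 y3,
    l23 p x2 (μ q x1 y1 y2) y3,
    l13 p (μ q x2 x3 y2) y3 w,
    lrot2 p x3 (μ q x2 y2 y3) w,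
    lrot p (μ q x2 x3 y2) y3 (μ k w x1 y1),
    l23 p x3 (μ q x2 y2 y3) (μ k w x1 y1),
    l13 p (μ q x1 x3 y1) y3 w,
    lrot2 p x3 (μ q x1 y1 y3) w,
    lrot p (μ q x1 x3 y1) y3 (μ k w x2 y2),
    l23 p x3 (μ q x1 y1 y3) (μ k w x2 y2),
    l13 p (μ q x1 x2 y1) y2 w,
    lrot2 p x2 (μ q x1 y1 y2) w,
    lrot p (μ q x1 x2 y1) y2 (μ k w x3 y3),
    l23 p x2 (μ q x1 y1 y2) (μ k w x3 y3),
    l13 q (μ k x1 x2 y1) y2 x3,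
    lrot q (μ k x1 x2 y1) y2 y3,
    l13 q (μ k x1 x2 y1) y2 w,
    lrot p (μ k x1 x2 y1) y2 (μ q w x3 y3),
    l23 q x2 (μ k x1 y1 y2) x3,
    l23 q x2 (μ k x1 y1 y2) y3,
    lrot2 q x2 (μ k x1 y1 y2) w,
    l23 p x2 (μ k x1 y1 y2) (μ q w x3 y3),
    lrot2 p (μ k x1 x3 y1) (μ q x2 y2 y3) w,
    lrot p (μ k x1 x3 y1) y3 (μ q w x2 y2),
    l13 q (μ k x1 x3 y1) y3 w,
    l13 p (μ q x2 x3 y2) (μ k x1 y1 y3) w,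
    l23 p x3 (μ k x1 y1 y3) (μ q w x2 y2),
    lrot2 q x3 (μ k x1 y1 y3) w,
    l13 p (μ k x2 x3 y2) (μ q x1 y1 y3) w,
    lrot p (μ k x2 x3 y2) y3 (μ q w x1 y1),
    l13 q (μ k x2 x3 y2) y3 w,
    lrot2 p (μ q x1 x3 y1) (μ k x2 y2 y3) w,
    l23 p x3 (μ k x2 y2 y3) (μ q w x1 y1),
    lrot2 q x3 (μ k x2 y2 y3) w,
    map_neg, LinearMap.neg_apply, neg_neg]

  simp only [l12 k y3 w (μ p x3 y2 (μ q x1 x2 y1)),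
    l12 k y3 w (μ p x2 x3 (μ q x1 y1 y2)),
    l12 k y3 w (μ p x2 y2 (μ q x1 x3 y1)),
    l12 k y3 w (μ p x1 y1 (μ q x2 x3 y2)),
    l13 p (μ q x3 y2 (μ k x1 x2 y1)) y3 w,
    lrot2 p x3 (μ q y2 y3 (μ k x1 x2 y1)) w,
    l13 p (μ q x2 x3 (μ k x1 y1 y2)) y3 w,
    lrot2 p x3 (μ q x2 y3 (μ k x1 y1 y2)) w,
    l13 p (μ q x2 y2 (μ k x1 x3 y1)) y3 w,
    lrot2 p x3 (μ q x2 y2 (μ k x1 y1 y3)) w,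
    l13 p (μ q x1 y1 (μ k x2 x3 y2)) y3 w,
    lrot2 p x3 (μ q x1 y1 (μ k x2 y2 y3)) w,
    map_neg, LinearMap.neg_apply, neg_neg]

  abel


set_option maxHeartbeats 4000000 in
lemma decompQ (μ : ℕ → (L →ₗ[K] L →ₗ[K] L →ₗ[K] L)) (φ : ℕ → (L →ₗ[K] L))
    (h12 : ∀ i (x y z : L), μ i x y z = - μ i y x z)
    (h23 : ∀ i (x y z : L), μ i x y z = - μ i x z y)
    (k p q : ℕ) (x1 y1 x2 y2 z : L) :
    OpQ μ φ k p q x1 y1 x2 y2 z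
      = GQ1 μ φ k p q x1 y1 x2 y2 z - GQ1 μ φ p k q x1 y1 x2 y2 z
        + (GQ2 μ φ k p q x1 y1 x2 y2 z - GQ2 μ φ k q p x1 y1 x2 y2 z) := by
  have l12 := h12
  have l23 := h23
  have l13 : ∀ i (a b c : L), μ i a b c = - μ i c b a := by
    intro i a b c; rw [h12 i a b c, h23 i b a c, h12 i b c a]; abel
  have lrot : ∀ i (a b c : L), μ i a b c = μ i b c a := by
    intro i a b c; rw [h12 i a b c, h23 i b a c]; abel
  have lrot2 : ∀ i (a b c : L), μ i a b c = μ i c a b := by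
    intro i a b c; rw [h23 i a b c, h12 i a c b]; abel
  simp only [OpQ, Dfun, hfun, GQ1, GQ2, map_add, map_sub]

  simp only [l23 q x1 y1 x2,
    l23 k x1 y1 x2,
    map_neg, LinearMap.neg_apply, neg_neg]

  simp only [l13 p (φ q x1) y1 x2,
    l23 p x1 (φ q y1) x2,
    lrot p (φ q x1) y1 y2,
    l23 p x1 (φ q y1) y2,
    lrot p (φ q x2) y2 z,
    l23 p x2 (φ q y2) z,
    l12 p (φ q x2) y2 (μ k x1 y1 z),
    lrot p (φ q x1) y1 z,
    l23 p x1 (φ q y1) z,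
    l12 p (φ q x1) y1 (μ k x2 y2 z),
    lrot q (μ k x1 x2 y1) y2 z,
    l13 p (μ k x1 x2 y1) (φ q y2) z,
    lrot p (μ k x1 x2 y1) y2 (φ q z),
    l23 q x2 (μ k x1 y1 y2) z,
    lrot2 p (φ q x2) (μ k x1 y1 y2) z,
    l23 p x2 (μ k x1 y1 y2) (φ q z),
    l13 q (φ k x1) y1 x2,
    lrot q (φ k x1) y1 y2,
    lrot q (φ k x1) y1 z,
    l12 p (φ k x1) y1 (μ q x2 y2 z),
    l23 q x1 (φ k y1) x2,
    l23 q x1 (φ k y1) y2,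
    l23 q x1 (φ k y1) z,
    lrot2 p (φ k x2) (μ q x1 y1 y2) z,
    l12 p (φ k x2) y2 (μ q x1 y1 z),
    lrot q (φ k x2) y2 z,
    l13 p (μ q x1 x2 y1) (φ k y2) z,
    l23 q x2 (φ k y2) z,
    lrot p (μ q x1 x2 y1) y2 (φ k z),
    l23 p x2 (μ q x1 y1 y2) (φ k z),
    lrot p (μ q x1 x2 y1) y2 z,
    l23 p x2 (μ q x1 y1 y2) z,
    map_neg, LinearMap.neg_apply, neg_neg]

  simp only [l12 k z x2 (φ p (μ q x1 y1 y2)),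
    l12 k z x2 (μ p y1 y2 (φ q x1)),
    l12 k z x2 (μ p x1 y2 (φ q y1)),
    l12 k z x2 (μ p x1 y1 (φ q y2)),
    lrot p (φ q (μ k x1 x2 y1)) y2 z,
    l23 p x2 (φ q (μ k x1 y1 y2)) z,
    lrot p (μ q x2 y1 (φ k x1)) y2 z,
    l23 p x2 (μ q y1 y2 (φ k x1)) z,
    lrot p (μ q x1 x2 (φ k y1)) y2 z,
    l23 p x2 (μ q x1 y2 (φ k y1)) z,
    lrot p (μ q x1 y1 (φ k x2)) y2 z,
    l23 p x2 (μ q x1 y1 (φ k y2)) z,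
    map_neg, LinearMap.neg_apply, neg_neg]

  abel


end ObstrGen

section ObstrGlue
variable {K L : Type} [Field K] [AddCommGroup L] [Module K L]

lemma Dsum_zero (μ : ℕ → (L →ₗ[K] L →ₗ[K] L →ₗ[K] L)) {m : ℕ} (hd : DeformEq μ m) :
    ∀ x y z v w : L,
      ∑ pq ∈ Finset.HasAntidiagonal.antidiagonal m, Dfun μ pq.1 pq.2 x y z v w = 0 := by
  intro x y z v w
  have h := hd x y z v w
  simp only [Dfun]
  rw [Finset.sum_sub_distrib, sub_eq_zero]
  exact h.symm

lemma Hsum_zero (μ : ℕ → (L →ₗ[K] L →ₗ[K] L →ₗ[K] L)) (φ : ℕ → (L →ₗ[K] L))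
    {m : ℕ} (hd : DerivEq μ φ m) :
    ∀ x y z : L,
      ∑ pq ∈ Finset.HasAntidiagonal.antidiagonal m, hfun μ φ pq.1 pq.2 x y z = 0 := by
  intro x y z
  have h := hd x y z
  simp only [hfun]
  rw [Finset.sum_sub_distrib, sub_eq_zero]
  exact h

lemma OpD_sum (μ : ℕ → (L →ₗ[K] L →ₗ[K] L →ₗ[K] L)) (kk : ℕ) (s : Finset (ℕ × ℕ))
    (x1 y1 x2 y2 x3 y3 w : L) :
    ∑ pq ∈ s, OpD μ kk pq.1 pq.2 x1 y1 x2 y2 x3 y3 w =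
      μ kk y3 w (∑ pq ∈ s, Dfun μ pq.1 pq.2 x1 y1 x2 y2 x3)
      + μ kk w x3 (∑ pq ∈ s, Dfun μ pq.1 pq.2 x1 y1 x2 y2 y3)
      + μ kk x1 y1 (∑ pq ∈ s, Dfun μ pq.1 pq.2 x2 y2 x3 y3 w)
      - μ kk x2 y2 (∑ pq ∈ s, Dfun μ pq.1 pq.2 x1 y1 x3 y3 w)
      + μ kk x3 y3 (∑ pq ∈ s, Dfun μ pq.1 pq.2 x1 y1 x2 y2 w)
      - (∑ pq ∈ s, Dfun μ pq.1 pq.2 x2 y2 x3 y3 (μ kk x1 y1 w))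
      + (∑ pq ∈ s, Dfun μ pq.1 pq.2 x1 y1 x3 y3 (μ kk x2 y2 w))
      - (∑ pq ∈ s, Dfun μ pq.1 pq.2 x1 y1 x2 y2 (μ kk x3 y3 w))
      - (∑ pq ∈ s, Dfun μ pq.1 pq.2 (μ kk x1 y1 x2) y2 x3 y3 w)
      - (∑ pq ∈ s, Dfun μ pq.1 pq.2 x2 (μ kk x1 y1 y2) x3 y3 w)
      - (∑ pq ∈ s, Dfun μ pq.1 pq.2 x2 y2 (μ kk x1 y1 x3) y3 w)
      - (∑ pq ∈ s, Dfun μ pq.1 pq.2 x2 y2 x3 (μ kk x1 y1 y3) w)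
      + (∑ pq ∈ s, Dfun μ pq.1 pq.2 x1 y1 (μ kk x2 y2 x3) y3 w)
      + (∑ pq ∈ s, Dfun μ pq.1 pq.2 x1 y1 x3 (μ kk x2 y2 y3) w) := by
  simp only [OpD, Finset.sum_add_distrib, Finset.sum_sub_distrib, map_sum]

lemma OpQ_sum (μ : ℕ → (L →ₗ[K] L →ₗ[K] L →ₗ[K] L)) (φ : ℕ → (L →ₗ[K] L)) (kk : ℕ)
    (s : Finset (ℕ × ℕ)) (x1 y1 x2 y2 z : L) :
    ∑ pq ∈ s, OpQ μ φ kk pq.1 pq.2 x1 y1 x2 y2 z =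
      - μ kk y2 z (∑ pq ∈ s, hfun μ φ pq.1 pq.2 x1 y1 x2)
      - μ kk z x2 (∑ pq ∈ s, hfun μ φ pq.1 pq.2 x1 y1 y2)
      + μ kk x1 y1 (∑ pq ∈ s, hfun μ φ pq.1 pq.2 x2 y2 z)
      - (∑ pq ∈ s, hfun μ φ pq.1 pq.2 x2 y2 (μ kk x1 y1 z))
      - μ kk x2 y2 (∑ pq ∈ s, hfun μ φ pq.1 pq.2 x1 y1 z)
      + (∑ pq ∈ s, hfun μ φ pq.1 pq.2 x1 y1 (μ kk x2 y2 z))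
      - (∑ pq ∈ s, hfun μ φ pq.1 pq.2 (μ kk x1 y1 x2) y2 z)
      - (∑ pq ∈ s, hfun μ φ pq.1 pq.2 x2 (μ kk x1 y1 y2) z)
      - (∑ pq ∈ s, Dfun μ pq.1 pq.2 (φ kk x1) y1 x2 y2 z)
      - (∑ pq ∈ s, Dfun μ pq.1 pq.2 x1 (φ kk y1) x2 y2 z)
      - (∑ pq ∈ s, Dfun μ pq.1 pq.2 x1 y1 (φ kk x2) y2 z)
      - (∑ pq ∈ s, Dfun μ pq.1 pq.2 x1 y1 x2 (φ kk y2) z)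
      - (∑ pq ∈ s, Dfun μ pq.1 pq.2 x1 y1 x2 y2 (φ kk z))
      + φ kk (∑ pq ∈ s, Dfun μ pq.1 pq.2 x1 y1 x2 y2 z) := by
  simp only [OpQ, Finset.sum_add_distrib, Finset.sum_sub_distrib, Finset.sum_neg_distrib, map_sum]

lemma zeroOpD (μ : ℕ → (L →ₗ[K] L →ₗ[K] L →ₗ[K] L)) (kk : ℕ) {m : ℕ}
    (hd : DeformEq μ m) (x1 y1 x2 y2 x3 y3 w : L) :
    ∑ pq ∈ Finset.HasAntidiagonal.antidiagonal m, OpD μ kk pq.1 pq.2 x1 y1 x2 y2 x3 y3 w = 0 := by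
  have hG := Dsum_zero μ hd
  rw [OpD_sum]
  simp only [hG, map_zero, add_zero, zero_add, sub_zero, zero_sub, neg_zero, neg_neg, add_neg_cancel, sub_self]

lemma zeroOpQ (μ : ℕ → (L →ₗ[K] L →ₗ[K] L →ₗ[K] L)) (φ : ℕ → (L →ₗ[K] L)) (kk : ℕ)
    {m : ℕ} (hd : DeformEq μ m) (hh : DerivEq μ φ m) (x1 y1 x2 y2 z : L) :
    ∑ pq ∈ Finset.HasAntidiagonal.antidiagonal m, OpQ μ φ kk pq.1 pq.2 x1 y1 x2 y2 z = 0 := by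
  have hG := Dsum_zero μ hd
  have hH := Hsum_zero μ φ hh
  rw [OpQ_sum]
  simp only [hG, hH, map_zero, add_zero, zero_add, sub_zero, zero_sub, neg_zero, neg_neg, add_neg_cancel, sub_self]

end ObstrGlue

section ObstrGlue2
variable {K L : Type} [Field K] [AddCommGroup L] [Module K L]

lemma comp1 (μ : ℕ → (L →ₗ[K] L →ₗ[K] L →ₗ[K] L)) (N : ℕ)
    (h12 : ∀ i (x y z : L), μ i x y z = - μ i y x z)
    (h23 : ∀ i (x y z : L), μ i x y z = - μ i x z y)
    (hd : ∀ n, n ≤ N → DeformEq μ n) (x1 y1 x2 y2 x3 y3 w : L) :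
    ∑ pq ∈ Finset.HasAntidiagonal.antidiagonal (N+1), OpD μ 0 pq.1 pq.2 x1 y1 x2 y2 x3 y3 w = 0 := by
  have h2 : ∑ x ∈ (Finset.range (N+1+1)).sigma (fun k => Finset.HasAntidiagonal.antidiagonal (N+1-k)),
      OpD μ x.1 x.2.1 x.2.2 x1 y1 x2 y2 x3 y3 w
      = ∑ pq ∈ Finset.HasAntidiagonal.antidiagonal (N+1), OpD μ 0 pq.1 pq.2 x1 y1 x2 y2 x3 y3 w := by
    rw [Finset.sum_sigma, Finset.sum_range_succ']
    have hz : ∀ i ∈ Finset.range (N+1),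
        (∑ pq ∈ Finset.HasAntidiagonal.antidiagonal (N+1-(i+1)), OpD μ (i+1) pq.1 pq.2 x1 y1 x2 y2 x3 y3 w) = 0 := by
      intro i hi
      simp only [Finset.mem_range] at hi
      exact zeroOpD μ (i+1) (hd (N+1-(i+1)) (by omega)) x1 y1 x2 y2 x3 y3 w
    rw [Finset.sum_eq_zero hz, zero_add, Nat.sub_zero]
  rw [← h2]
  have hc : ∀ x ∈ (Finset.range (N+1+1)).sigma (fun k => Finset.HasAntidiagonal.antidiagonal (N+1-k)),
      OpD μ x.1 x.2.1 x.2.2 x1 y1 x2 y2 x3 y3 w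
      = GD1 μ x.1 x.2.1 x.2.2 x1 y1 x2 y2 x3 y3 w - GD1 μ x.2.1 x.1 x.2.2 x1 y1 x2 y2 x3 y3 w
        + (GD2 μ x.1 x.2.1 x.2.2 x1 y1 x2 y2 x3 y3 w - GD2 μ x.1 x.2.2 x.2.1 x1 y1 x2 y2 x3 y3 w) :=
    fun x _ => decompD μ h12 h23 x.1 x.2.1 x.2.2 x1 y1 x2 y2 x3 y3 w
  rw [Finset.sum_congr rfl hc, Finset.sum_add_distrib, Finset.sum_sub_distrib,
    Finset.sum_sub_distrib]
  have r1 : ∑ x ∈ (Finset.range (N+1+1)).sigma (fun k => Finset.HasAntidiagonal.antidiagonal (N+1-k)),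
      GD1 μ x.1 x.2.1 x.2.2 x1 y1 x2 y2 x3 y3 w
      = ∑ x ∈ (Finset.range (N+1+1)).sigma (fun k => Finset.HasAntidiagonal.antidiagonal (N+1-k)),
      GD1 μ x.2.1 x.1 x.2.2 x1 y1 x2 y2 x3 y3 w := by
    apply Finset.sum_nbij' (i := fun x => ⟨x.2.1, (x.1, x.2.2)⟩)
      (j := fun x => ⟨x.2.1, (x.1, x.2.2)⟩)
    · intro a ha
      simp only [Finset.mem_sigma, Finset.mem_range, Finset.HasAntidiagonal.mem_antidiagonal] at ha ⊢
      omega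
    · intro a ha
      simp only [Finset.mem_sigma, Finset.mem_range, Finset.HasAntidiagonal.mem_antidiagonal] at ha ⊢
      omega
    · intro a _; rfl
    · intro a _; rfl
    · intro a _; rfl
  have r2 : ∑ x ∈ (Finset.range (N+1+1)).sigma (fun k => Finset.HasAntidiagonal.antidiagonal (N+1-k)),
      GD2 μ x.1 x.2.1 x.2.2 x1 y1 x2 y2 x3 y3 w
      = ∑ x ∈ (Finset.range (N+1+1)).sigma (fun k => Finset.HasAntidiagonal.antidiagonal (N+1-k)),
      GD2 μ x.1 x.2.2 x.2.1 x1 y1 x2 y2 x3 y3 w := by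
    apply Finset.sum_nbij' (i := fun x => ⟨x.1, (x.2.2, x.2.1)⟩)
      (j := fun x => ⟨x.1, (x.2.2, x.2.1)⟩)
    · intro a ha
      simp only [Finset.mem_sigma, Finset.mem_range, Finset.HasAntidiagonal.mem_antidiagonal] at ha ⊢
      omega
    · intro a ha
      simp only [Finset.mem_sigma, Finset.mem_range, Finset.HasAntidiagonal.mem_antidiagonal] at ha ⊢
      omega
    · intro a _; rfl
    · intro a _; rfl
    · intro a _; rfl
  rw [r1, r2]
  abel

lemma comp2 (μ : ℕ → (L →ₗ[K] L →ₗ[K] L →ₗ[K] L)) (φ : ℕ → (L →ₗ[K] L)) (N : ℕ)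
    (h12 : ∀ i (x y z : L), μ i x y z = - μ i y x z)
    (h23 : ∀ i (x y z : L), μ i x y z = - μ i x z y)
    (hd : ∀ n, n ≤ N → DeformEq μ n) (hh : ∀ n, n ≤ N → DerivEq μ φ n)
    (x1 y1 x2 y2 z : L) :
    ∑ pq ∈ Finset.HasAntidiagonal.antidiagonal (N+1), OpQ μ φ 0 pq.1 pq.2 x1 y1 x2 y2 z = 0 := by
  have h2 : ∑ x ∈ (Finset.range (N+1+1)).sigma (fun k => Finset.HasAntidiagonal.antidiagonal (N+1-k)),
      OpQ μ φ x.1 x.2.1 x.2.2 x1 y1 x2 y2 z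
      = ∑ pq ∈ Finset.HasAntidiagonal.antidiagonal (N+1), OpQ μ φ 0 pq.1 pq.2 x1 y1 x2 y2 z := by
    rw [Finset.sum_sigma, Finset.sum_range_succ']
    have hz : ∀ i ∈ Finset.range (N+1),
        (∑ pq ∈ Finset.HasAntidiagonal.antidiagonal (N+1-(i+1)), OpQ μ φ (i+1) pq.1 pq.2 x1 y1 x2 y2 z) = 0 := by
      intro i hi
      simp only [Finset.mem_range] at hi
      exact zeroOpQ μ φ (i+1) (hd (N+1-(i+1)) (by omega)) (hh (N+1-(i+1)) (by omega)) x1 y1 x2 y2 z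
    rw [Finset.sum_eq_zero hz, zero_add, Nat.sub_zero]
  rw [← h2]
  have hc : ∀ x ∈ (Finset.range (N+1+1)).sigma (fun k => Finset.HasAntidiagonal.antidiagonal (N+1-k)),
      OpQ μ φ x.1 x.2.1 x.2.2 x1 y1 x2 y2 z
      = GQ1 μ φ x.1 x.2.1 x.2.2 x1 y1 x2 y2 z - GQ1 μ φ x.2.1 x.1 x.2.2 x1 y1 x2 y2 z
        + (GQ2 μ φ x.1 x.2.1 x.2.2 x1 y1 x2 y2 z - GQ2 μ φ x.1 x.2.2 x.2.1 x1 y1 x2 y2 z) :=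
    fun x _ => decompQ μ φ h12 h23 x.1 x.2.1 x.2.2 x1 y1 x2 y2 z
  rw [Finset.sum_congr rfl hc, Finset.sum_add_distrib, Finset.sum_sub_distrib,
    Finset.sum_sub_distrib]
  have r1 : ∑ x ∈ (Finset.range (N+1+1)).sigma (fun k => Finset.HasAntidiagonal.antidiagonal (N+1-k)),
      GQ1 μ φ x.1 x.2.1 x.2.2 x1 y1 x2 y2 z
      = ∑ x ∈ (Finset.range (N+1+1)).sigma (fun k => Finset.HasAntidiagonal.antidiagonal (N+1-k)),
      GQ1 μ φ x.2.1 x.1 x.2.2 x1 y1 x2 y2 z := by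
    apply Finset.sum_nbij' (i := fun x => ⟨x.2.1, (x.1, x.2.2)⟩)
      (j := fun x => ⟨x.2.1, (x.1, x.2.2)⟩)
    · intro a ha
      simp only [Finset.mem_sigma, Finset.mem_range, Finset.HasAntidiagonal.mem_antidiagonal] at ha ⊢
      omega
    · intro a ha
      simp only [Finset.mem_sigma, Finset.mem_range, Finset.HasAntidiagonal.mem_antidiagonal] at ha ⊢
      omega
    · intro a _; rfl
    · intro a _; rfl
    · intro a _; rfl
  have r2 : ∑ x ∈ (Finset.range (N+1+1)).sigma (fun k => Finset.HasAntidiagonal.antidiagonal (N+1-k)),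
      GQ2 μ φ x.1 x.2.1 x.2.2 x1 y1 x2 y2 z
      = ∑ x ∈ (Finset.range (N+1+1)).sigma (fun k => Finset.HasAntidiagonal.antidiagonal (N+1-k)),
      GQ2 μ φ x.1 x.2.2 x.2.1 x1 y1 x2 y2 z := by
    apply Finset.sum_nbij' (i := fun x => ⟨x.1, (x.2.2, x.2.1)⟩)
      (j := fun x => ⟨x.1, (x.2.2, x.2.1)⟩)
    · intro a ha
      simp only [Finset.mem_sigma, Finset.mem_range, Finset.HasAntidiagonal.mem_antidiagonal] at ha ⊢
      omega
    · intro a ha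
      simp only [Finset.mem_sigma, Finset.mem_range, Finset.HasAntidiagonal.mem_antidiagonal] at ha ⊢
      omega
    · intro a _; rfl
    · intro a _; rfl
    · intro a _; rfl
  rw [r1, r2]
  abel

end ObstrGlue2

section ObstrFinal
variable {K L : Type} [Field K] [AddCommGroup L] [Module K L]

lemma ob3_unfold (μ : ℕ → (L →ₗ[K] L →ₗ[K] L →ₗ[K] L)) (N : ℕ)
    (hb : ∀ i, N < i → μ i = 0) :
    ∀ (Y : Fin 2 → L × L) (ww : L), Ob3 μ N Y ww
      = ∑ pq ∈ Finset.HasAntidiagonal.antidiagonal (N+1),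
          Dfun μ pq.1 pq.2 (Y 0).1 (Y 0).2 (Y 1).1 (Y 1).2 ww := by
  intro Y ww
  simp only [Ob3]
  rw [Finset.sum_filter]
  apply Finset.sum_congr rfl
  intro pq hpq
  simp only [Finset.HasAntidiagonal.mem_antidiagonal] at hpq
  by_cases h : pq.1 ≠ 0 ∧ pq.2 ≠ 0
  · rw [if_pos h]; simp only [Dfun]
  · rw [if_neg h]
    rcases (by tauto : pq.1 = 0 ∨ pq.2 = 0) with h0 | h0
    · have h2 : pq.2 = N+1 := by omega
      simp [Dfun, h2, hb (N+1) (by omega)]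
    · have h2 : pq.1 = N+1 := by omega
      simp [Dfun, h2, hb (N+1) (by omega)]

lemma ob2_unfold (μ : ℕ → (L →ₗ[K] L →ₗ[K] L →ₗ[K] L)) (φ : ℕ → (L →ₗ[K] L)) (N : ℕ)
    (hbμ : ∀ i, N < i → μ i = 0) (hbφ : ∀ i, N < i → φ i = 0) :
    ∀ (Y : Fin 1 → L × L) (zz : L), Ob2 μ φ N Y zz
      = ∑ pq ∈ Finset.HasAntidiagonal.antidiagonal (N+1),
          hfun μ φ pq.1 pq.2 (Y 0).1 (Y 0).2 zz := by
  intro Y zz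
  simp only [Ob2]
  rw [Finset.sum_filter]
  apply Finset.sum_congr rfl
  intro pq hpq
  simp only [Finset.HasAntidiagonal.mem_antidiagonal] at hpq
  by_cases h : pq.1 ≠ 0 ∧ pq.2 ≠ 0
  · rw [if_pos h]; simp only [hfun]; abel
  · rw [if_neg h]
    rcases (by tauto : pq.1 = 0 ∨ pq.2 = 0) with h0 | h0
    · have h2 : pq.2 = N+1 := by omega
      simp [hfun, h2, hbμ (N+1) (by omega), hbφ (N+1) (by omega)]
    · have h2 : pq.1 = N+1 := by omega
      simp [hfun, h2, hbμ (N+1) (by omega), hbφ (N+1) (by omega)]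

end ObstrFinal


set_option maxHeartbeats 4000000 in
/-- for an order-`N` deformation of a 3-LieDer pair, the pair
`(Ob³, Ob²)` is a 3-cocycle in the 3-LieDer cohomology with self coefficients,
i.e. `∂(Ob³, Ob²) = (d Ob³, d Ob² - δ Ob³) = 0`. -/
theorem obstruction_pair_is_three_cocycle
    (K L : Type) [Field K] [AddCommGroup L] [Module K L]
    (A : ThreeLieAlgebra K L) (φL : L →ₗ[K] L) (hφL : IsDer A φL)
    (N : ℕ) (μ : ℕ → (L →ₗ[K] L →ₗ[K] L →ₗ[K] L)) (φ : ℕ → (L →ₗ[K] L))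
    (hdef : IsDeformationOfOrder N A φL μ φ) :
    dCob (fun x y z => A.br x y z) (fun x y m => A.br x y m) (Ob3 μ N) = 0 ∧
    dCob (fun x y z => A.br x y z) (fun x y m => A.br x y m) (Ob2 μ φ N)
      - deltaOp (fun x => φL x) (fun x => φL x) (Ob3 μ N) = 0 := by 
  have h12 := hdef.skew₁₂
  have h23 := hdef.skew₂₃
  have hbμ : ∀ i, N < i → μ i = 0 := fun i hi => (hdef.bound i hi).1
  have hbφ : ∀ i, N < i → φ i = 0 := fun i hi => (hdef.bound i hi).2
  have ob3u := ob3_unfold μ N hbμ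
  have ob2u := ob2_unfold μ φ N hbμ hbφ
  constructor
  · funext X w
    calc dCob (fun x y z => A.br x y z) (fun x y m => A.br x y m) (Ob3 μ N) X w
        = ∑ pq ∈ Finset.HasAntidiagonal.antidiagonal (N+1),
            OpD μ 0 pq.1 pq.2 (X 0).1 (X 0).2 (X 1).1 (X 1).2 (X 2).1 (X 2).2 w := by
          rw [dCob_two_eval]
          rw [OpD_sum]
          simp only [ob3u, Matrix.cons_val_zero, Matrix.cons_val_one, Matrix.head_cons,
            ← hdef.init_br]
          abel
      _ = 0 := comp1 μ N h12 h23 hdef.deform _ _ _ _ _ _ _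
  · funext X z
    calc (dCob (fun x y z => A.br x y z) (fun x y m => A.br x y m) (Ob2 μ φ N)
          - deltaOp (fun x => φL x) (fun x => φL x) (Ob3 μ N)) X z
        = ∑ pq ∈ Finset.HasAntidiagonal.antidiagonal (N+1),
            OpQ μ φ 0 pq.1 pq.2 (X 0).1 (X 0).2 (X 1).1 (X 1).2 z := by
          rw [Pi.sub_apply, Pi.sub_apply]
          rw [dCob_one_eval, deltaOp_two_eval]
          rw [OpQ_sum]
          simp only [ob2u, ob3u, Matrix.cons_val_zero, Matrix.cons_val_one, Matrix.head_cons,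
            ← hdef.init_br, ← hdef.init_der]
          abel
      _ = 0 := comp2 μ φ N h12 h23 hdef.deform hdef.deriv _ _ _ _ _
end

section
/- An order-N deformation (μ_t, φ_t) of a 3-LieDer pair (L, φ_L) extends to an order-(N+1) deformation if and only if the obstruction class [(Ob³, Ob²)] ∈ H³_{3-LieDer}(L, L) vanishes; explicitly, (μ_t + t^{N+1}μ_{N+1}, φ_t + t^{N+1}φ_{N+1}) is an order-(N+1) deformation iff d(μ_{N+1}) = Ob³ and d(φ_{N+1}) + δ(μ_{N+1}) = Ob². -/
/-!
The coefficient of `t^{N+1}` in the fundamental identity (resp. the derivation identity) of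
`(μ_t + t^{N+1} f, φ_t + t^{N+1} g)` is a sum over `i + j = N + 1`. The two end terms
`i = 0` or `j = 0` are exactly `-d f` (resp. `-(d g + δ f)`), while the interior terms only
involve the known coefficients `μ_i, φ_i` with `i ≤ N` and add up to `Ob³` (resp. `Ob²`).
The equations of degree `≤ N` do not involve `f` and `g` at all.
-/

open Finset.HasAntidiagonal Function

namespace ThreeLieAlgebra

variable {K L : Type} [Field K] [AddCommGroup L] [Module K L]

lemma br_cycle (A : ThreeLieAlgebra K L) (a b c : L) : A.br c a b = A.br a b c := by
  rw [A.skew₁₂ c a b, A.skew₂₃ a c b, neg_neg]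

end ThreeLieAlgebra

lemma sum_antidiagonal_succ_eq_add_sum_interior {M : Type} [AddCommMonoid M] (N : ℕ)
    (F : ℕ × ℕ → M) :
    ∑ ij ∈ antidiagonal (N + 1), F ij
      = F (0, N + 1) + F (N + 1, 0)
        + ∑ ij ∈ (antidiagonal (N + 1)).filter (fun q => q.1 ≠ 0 ∧ q.2 ≠ 0), F ij := by
  rw [← Finset.sum_filter_add_sum_filter_not (antidiagonal (N + 1))
    (fun q => q.1 ≠ 0 ∧ q.2 ≠ 0) F, add_comm]
  have ends : (antidiagonal (N + 1)).filter (fun q => ¬(q.1 ≠ 0 ∧ q.2 ≠ 0))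
      = {(0, N + 1), (N + 1, 0)} := by
    ext ⟨a, b⟩
    simp only [Finset.mem_filter, mem_antidiagonal, Finset.mem_insert, Finset.mem_singleton,
      Prod.mk.injEq, not_and_or, not_ne_iff]
    omega
  rw [ends, Finset.sum_pair (by simp)]

lemma sum_interior_antidiagonal_swap {M : Type} [AddCommMonoid M] (n : ℕ) (F : ℕ × ℕ → M) :
    ∑ ij ∈ (antidiagonal n).filter (fun q => q.1 ≠ 0 ∧ q.2 ≠ 0), F ij.swap
      = ∑ ij ∈ (antidiagonal n).filter (fun q => q.1 ≠ 0 ∧ q.2 ≠ 0), F ij := by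
  rw [Finset.sum_filter, Finset.sum_filter, ← Finset.Nat.sum_antidiagonal_swap]
  simp only [Prod.fst_swap, Prod.snd_swap, Prod.swap_swap, and_comm]

section UpdateCoefficient

variable {α β M : Type} [AddCommMonoid M] (a : ℕ → α) (b : ℕ → β) (a' : α) (b' : β)
  (F : α → β → M)

lemma sum_antidiagonal_update_of_lt {n m : ℕ} (hnm : n < m) :
    ∑ ij ∈ antidiagonal n, F (update a m a' ij.1) (update b m b' ij.2)
      = ∑ ij ∈ antidiagonal n, F (a ij.1) (b ij.2) :=
  Finset.sum_congr rfl fun _ hij => by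
    rw [update_of_ne (antidiagonal.fst_le hij |>.trans_lt hnm).ne,
      update_of_ne (antidiagonal.snd_le hij |>.trans_lt hnm).ne]

lemma sum_antidiagonal_succ_update (N : ℕ) :
    ∑ ij ∈ antidiagonal (N + 1), F (update a (N + 1) a' ij.1) (update b (N + 1) b' ij.2)
      = F (a 0) b' + F a' (b 0)
        + ∑ ij ∈ (antidiagonal (N + 1)).filter (fun q => q.1 ≠ 0 ∧ q.2 ≠ 0),
            F (a ij.1) (b ij.2) := by
  rw [sum_antidiagonal_succ_eq_add_sum_interior]
  refine congrArg₂ (· + ·) (by simp) (Finset.sum_congr rfl fun ij hij => ?_)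
  simp only [Finset.mem_filter, mem_antidiagonal] at hij
  rw [update_of_ne (by omega), update_of_ne (by omega)]

end UpdateCoefficient

section Defects

variable {K L : Type} [Field K] [AddCommGroup L] [Module K L]

/-- `fundDefect μ μ = 0` is the fundamental identity of `μ`. -/
def fundDefect (μ ν : L →ₗ[K] L →ₗ[K] L →ₗ[K] L) (x y z v w : L) : L :=
  μ (ν x y z) v w + μ z (ν x y v) w + μ z v (ν x y w) - μ x y (ν z v w)

/-- `derDefect φ μ = 0` says that `φ` is a derivation of `μ`. -/
def derDefect (φ : L →ₗ[K] L) (μ : L →ₗ[K] L →ₗ[K] L →ₗ[K] L) (x y z : L) : L :=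
  φ (μ x y z) - μ (φ x) y z - μ x (φ y) z - μ x y (φ z)

lemma deformEq_iff_sum_fundDefect (μ : ℕ → (L →ₗ[K] L →ₗ[K] L →ₗ[K] L)) (n : ℕ) :
    DeformEq μ n ↔
      ∀ x y z v w, ∑ ij ∈ antidiagonal n, fundDefect (μ ij.1) (μ ij.2) x y z v w = 0 := by
  refine forall₅_congr fun x y z v w => ?_
  rw [eq_comm, ← sub_eq_zero, ← Finset.sum_sub_distrib]
  rfl

lemma derivEq_iff_sum_derDefect (μ : ℕ → (L →ₗ[K] L →ₗ[K] L →ₗ[K] L))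
    (φ : ℕ → (L →ₗ[K] L)) (n : ℕ) :
    DerivEq μ φ n ↔
      ∀ x y z, ∑ ij ∈ antidiagonal n, derDefect (φ ij.1) (μ ij.2) x y z = 0 := by
  simp only [DerivEq, derDefect, sub_sub, Finset.sum_sub_distrib, sub_eq_zero]
  refine forall₃_congr fun x y z => ?_
  rw [← Finset.Nat.sum_antidiagonal_swap (f := fun ij =>
    μ ij.1 (φ ij.2 x) y z + μ ij.1 x (φ ij.2 y) z + μ ij.1 x y (φ ij.2 z))]
  rfl

lemma Ob3_apply (μ : ℕ → (L →ₗ[K] L →ₗ[K] L →ₗ[K] L)) (N : ℕ) (X : Fin 2 → L × L) (w : L) :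
    Ob3 μ N X w = ∑ ij ∈ (antidiagonal (N + 1)).filter (fun q => q.1 ≠ 0 ∧ q.2 ≠ 0),
      fundDefect (μ ij.1) (μ ij.2) (X 0).1 (X 0).2 (X 1).1 (X 1).2 w :=
  rfl

lemma Ob2_apply (μ : ℕ → (L →ₗ[K] L →ₗ[K] L →ₗ[K] L)) (φ : ℕ → (L →ₗ[K] L)) (N : ℕ)
    (X : Fin 1 → L × L) (z : L) :
    Ob2 μ φ N X z = ∑ ij ∈ (antidiagonal (N + 1)).filter (fun q => q.1 ≠ 0 ∧ q.2 ≠ 0),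
      derDefect (φ ij.1) (μ ij.2) (X 0).1 (X 0).2 z := by
  simp only [Ob2, derDefect, sub_sub, Finset.sum_sub_distrib]
  rw [← sum_interior_antidiagonal_swap _ (fun ij => μ ij.1 (φ ij.2 (X 0).1) (X 0).2 z
    + μ ij.1 (X 0).1 (φ ij.2 (X 0).2) z + μ ij.1 (X 0).1 (X 0).2 (φ ij.2 z))]
  rfl

lemma deformEq_update_of_lt (μ : ℕ → (L →ₗ[K] L →ₗ[K] L →ₗ[K] L)) {n m : ℕ} (hnm : n < m)
    (f : L →ₗ[K] L →ₗ[K] L →ₗ[K] L) :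
    DeformEq (update μ m f) n ↔ DeformEq μ n := by
  simp only [deformEq_iff_sum_fundDefect]
  exact forall₅_congr fun x y z v w => by
    rw [sum_antidiagonal_update_of_lt μ μ f f (fun p q => fundDefect p q x y z v w) hnm]

lemma derivEq_update_of_lt (μ : ℕ → (L →ₗ[K] L →ₗ[K] L →ₗ[K] L)) (φ : ℕ → (L →ₗ[K] L))
    {n m : ℕ} (hnm : n < m) (f : L →ₗ[K] L →ₗ[K] L →ₗ[K] L) (g : L →ₗ[K] L) :
    DerivEq (update μ m f) (update φ m g) n ↔ DerivEq μ φ n := by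
  simp only [derivEq_iff_sum_derDefect]
  exact forall₃_congr fun x y z => by
    rw [sum_antidiagonal_update_of_lt φ μ g f (fun p q => derDefect p q x y z) hnm]

end Defects

section Cochains

variable {K L : Type} [Field K] [AddCommGroup L] [Module K L] (A : ThreeLieAlgebra K L)

lemma dCob_one_apply (f : L →ₗ[K] L →ₗ[K] L →ₗ[K] L) (X : Fin 2 → L × L) (w : L) :
    dCob (fun x y z => A.br x y z) (fun x y m => A.br x y m)
        ((fun X z => f (X 0).1 (X 0).2 z) : Cochain L L 1) X w
      = -(fundDefect A.br f (X 0).1 (X 0).2 (X 1).1 (X 1).2 w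
          + fundDefect f A.br (X 0).1 (X 0).2 (X 1).1 (X 1).2 w) := by
  rw [fundDefect, A.br_cycle (X 1).2 w, ← A.br_cycle (X 1).1 _ w]
  simp only [dCob, Int.reduceNeg, pow_one, Fin.last, Nat.reduceAdd, Fin.mk_one, Fin.isValue,
    Fin.castSucc_zero, neg_smul, one_smul, Fin.succAbove, Fin.succ_zero_eq_one, Fin.sum_univ_two,
    Fin.coe_ofNat_eq_mod, Nat.zero_mod, pow_zero, lt_self_iff_false, ↓reduceIte, Nat.mod_succ,
    zero_lt_one, zero_add, even_two, Even.neg_pow, one_pow, Fin.val_fin_lt, update, smul_add,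
    not_lt_zero, Fin.lt_one_iff, ite_eq_right_iff, zero_ne_one, imp_false, not_lt,
    nonpos_iff_eq_zero, Finset.sum_ite_eq', Finset.mem_univ, ↓reduceDIte, fundDefect, neg_add_rev,
    neg_sub]
  abel

lemma dCob_zero_add_deltaOp_apply (φL g : L →ₗ[K] L) (f : L →ₗ[K] L →ₗ[K] L →ₗ[K] L)
    (X : Fin 1 → L × L) (z : L) :
    (dCob (fun x y z => A.br x y z) (fun x y m => A.br x y m)
          ((fun _ z => g z) : Cochain L L 0)
        + deltaOp (fun x => φL x) (fun x => φL x)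
            ((fun X z => f (X 0).1 (X 0).2 z) : Cochain L L 1)) X z
      = -(derDefect φL f (X 0).1 (X 0).2 z + derDefect g A.br (X 0).1 (X 0).2 z) := by
  rw [derDefect, derDefect, A.br_cycle (X 0).2 z (g (X 0).1), ← A.br_cycle (X 0).1 (g (X 0).2) z]
  simp only [Nat.reduceAdd, Fin.isValue, Pi.add_apply, dCob, Int.reduceNeg, pow_zero, Fin.last,
    Fin.zero_eta, one_smul, Finset.univ_unique, Fin.default_eq_zero, Fin.val_eq_zero,
    Finset.sum_singleton, zero_add, pow_one, neg_smul, Finset.sum_neg_distrib, lt_self_iff_false,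
    ↓reduceIte, Finset.sum_const_zero, add_zero, deltaOp, update, eq_rec_constant, dite_eq_ite,
    neg_add_rev, neg_sub]
  abel

end Cochains

section ExtensionEquations

variable {K L : Type} [Field K] [AddCommGroup L] [Module K L] {A : ThreeLieAlgebra K L}
  {μ : ℕ → (L →ₗ[K] L →ₗ[K] L →ₗ[K] L)}

lemma deformEq_succ_update_iff (hμ0 : μ 0 = A.br) (N : ℕ) (f : L →ₗ[K] L →ₗ[K] L →ₗ[K] L) :
    DeformEq (update μ (N + 1) f) (N + 1) ↔
      dCob (fun x y z => A.br x y z) (fun x y m => A.br x y m)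
        ((fun X z => f (X 0).1 (X 0).2 z) : Cochain L L 1) = Ob3 μ N := by
  have pointwise : ∀ (X : Fin 2 → L × L) (w : L),
      (∑ ij ∈ antidiagonal (N + 1), fundDefect (update μ (N + 1) f ij.1)
          (update μ (N + 1) f ij.2) (X 0).1 (X 0).2 (X 1).1 (X 1).2 w = 0) ↔
        dCob (fun x y z => A.br x y z) (fun x y m => A.br x y m)
          ((fun X z => f (X 0).1 (X 0).2 z) : Cochain L L 1) X w = Ob3 μ N X w := fun X w => by
    rw [sum_antidiagonal_succ_update μ μ f f
        (fun p q => fundDefect p q (X 0).1 (X 0).2 (X 1).1 (X 1).2 w),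
      dCob_one_apply, neg_eq_iff_add_eq_zero, hμ0, Ob3_apply]
  simp only [deformEq_iff_sum_fundDefect, funext_iff, ← pointwise]
  exact ⟨fun h X w => h _ _ _ _ _, fun h x y z v w => h ![(x, y), (z, v)] w⟩

lemma derivEq_succ_update_iff {φL : L →ₗ[K] L} {φ : ℕ → (L →ₗ[K] L)} (hμ0 : μ 0 = A.br)
    (hφ0 : φ 0 = φL) (N : ℕ) (f : L →ₗ[K] L →ₗ[K] L →ₗ[K] L) (g : L →ₗ[K] L) :
    DerivEq (update μ (N + 1) f) (update φ (N + 1) g) (N + 1) ↔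
      dCob (fun x y z => A.br x y z) (fun x y m => A.br x y m)
          ((fun _ z => g z) : Cochain L L 0)
        + deltaOp (fun x => φL x) (fun x => φL x)
            ((fun X z => f (X 0).1 (X 0).2 z) : Cochain L L 1) = Ob2 μ φ N := by
  have pointwise : ∀ (X : Fin 1 → L × L) (z : L),
      (∑ ij ∈ antidiagonal (N + 1), derDefect (update φ (N + 1) g ij.1)
          (update μ (N + 1) f ij.2) (X 0).1 (X 0).2 z = 0) ↔
        (dCob (fun x y z => A.br x y z) (fun x y m => A.br x y m)
            ((fun _ z => g z) : Cochain L L 0)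
          + deltaOp (fun x => φL x) (fun x => φL x)
              ((fun X z => f (X 0).1 (X 0).2 z) : Cochain L L 1)) X z = Ob2 μ φ N X z :=
    fun X z => by
      rw [sum_antidiagonal_succ_update φ μ g f (fun p q => derDefect p q (X 0).1 (X 0).2 z),
        dCob_zero_add_deltaOp_apply, neg_eq_iff_add_eq_zero, hμ0, hφ0, Ob2_apply]
  simp only [derivEq_iff_sum_derDefect, funext_iff, ← pointwise]
  exact ⟨fun h X z => h _ _ _, fun h x y z => h ![(x, y)] z⟩

end ExtensionEquations

lemma isDeformationOfOrder_succ_update_iff {K L : Type} [Field K] [AddCommGroup L] [Module K L]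
    {A : ThreeLieAlgebra K L} {φL : L →ₗ[K] L} {N : ℕ} {μ : ℕ → (L →ₗ[K] L →ₗ[K] L →ₗ[K] L)}
    {φ : ℕ → (L →ₗ[K] L)} (hdef : IsDeformationOfOrder N A φL μ φ)
    (f : L →ₗ[K] L →ₗ[K] L →ₗ[K] L) (g : L →ₗ[K] L) :
    IsDeformationOfOrder (N + 1) A φL (update μ (N + 1) f) (update φ (N + 1) g) ↔
      (∀ x y z, f x y z = - f y x z) ∧ (∀ x y z, f x y z = - f x z y) ∧
        DeformEq (update μ (N + 1) f) (N + 1) ∧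
        DerivEq (update μ (N + 1) f) (update φ (N + 1) g) (N + 1) := by
  refine ⟨fun D => ⟨by simpa using D.skew₁₂ (N + 1), by simpa using D.skew₂₃ (N + 1),
    D.deform _ le_rfl, D.deriv _ le_rfl⟩, fun ⟨h₁₂, h₂₃, hdeform, hderiv⟩ => ?_⟩
  have h0 : (0 : ℕ) ≠ N + 1 := (Nat.succ_ne_zero N).symm
  refine ⟨by rw [update_of_ne h0, hdef.init_br], by rw [update_of_ne h0, hdef.init_der],
    fun i hi => ?_, fun i => ?_, fun i => ?_, fun n hn => ?_, fun n hn => ?_⟩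
  · rw [update_of_ne hi.ne', update_of_ne hi.ne']
    exact hdef.bound i (Nat.lt_of_succ_lt hi)
  · rcases eq_or_ne i (N + 1) with rfl | hi
    · simpa using h₁₂
    · simpa [update_of_ne hi] using hdef.skew₁₂ i
  · rcases eq_or_ne i (N + 1) with rfl | hi
    · simpa using h₂₃
    · simpa [update_of_ne hi] using hdef.skew₂₃ i
  · rcases hn.lt_or_eq with hlt | rfl
    · exact (deformEq_update_of_lt μ hlt f).2 (hdef.deform n (Nat.lt_succ_iff.1 hlt))
    · exact hdeform
  · rcases hn.lt_or_eq with hlt | rfl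
    · exact (derivEq_update_of_lt μ φ hlt f g).2 (hdef.deriv n (Nat.lt_succ_iff.1 hlt))
    · exact hderiv

theorem extendable_iff_obstruction_trivial_general
    (K L : Type) [Field K] [AddCommGroup L] [Module K L]
    (A : ThreeLieAlgebra K L) (φL : L →ₗ[K] L)
    (N : ℕ) (μ : ℕ → (L →ₗ[K] L →ₗ[K] L →ₗ[K] L)) (φ : ℕ → (L →ₗ[K] L))
    (hdef : IsDeformationOfOrder N A φL μ φ) :
    (∃ (μN : L →ₗ[K] L →ₗ[K] L →ₗ[K] L) (φN : L →ₗ[K] L),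
      IsDeformationOfOrder (N + 1) A φL
        (fun i => if i = N + 1 then μN else μ i)
        (fun i => if i = N + 1 then φN else φ i))
    ↔ (∃ (f : L →ₗ[K] L →ₗ[K] L →ₗ[K] L) (g : L →ₗ[K] L),
        (∀ x y z, f x y z = - f y x z) ∧ (∀ x y z, f x y z = - f x z y) ∧
        dCob (fun x y z => A.br x y z) (fun x y m => A.br x y m)
            ((fun X z => f (X 0).1 (X 0).2 z) : Cochain L L 1) = Ob3 μ N ∧
        dCob (fun x y z => A.br x y z) (fun x y m => A.br x y m)
            ((fun _ z => g z) : Cochain L L 0)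
          + deltaOp (fun x => φL x) (fun x => φL x)
              ((fun X z => f (X 0).1 (X 0).2 z) : Cochain L L 1)
          = Ob2 μ φ N) := by
  simp only [← update_apply, isDeformationOfOrder_succ_update_iff hdef,
    deformEq_succ_update_iff hdef.init_br, derivEq_succ_update_iff hdef.init_br hdef.init_der]

/-- an order-`N` deformation `(μ_t, φ_t)` of a 3-LieDer pair extends
to an order-`(N+1)` deformation iff the obstruction class `[(Ob³, Ob²)]` vanishes,
i.e. iff there are a skew trilinear `f` and linear `g` with `d f = Ob³` and
`d g + δ f = Ob²`. -/
theorem extendable_iff_obstruction_trivial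
    (K L : Type) [Field K] [AddCommGroup L] [Module K L]
    (A : ThreeLieAlgebra K L) (φL : L →ₗ[K] L) (hφL : IsDer A φL)
    (N : ℕ) (μ : ℕ → (L →ₗ[K] L →ₗ[K] L →ₗ[K] L)) (φ : ℕ → (L →ₗ[K] L))
    (hdef : IsDeformationOfOrder N A φL μ φ) :
    (∃ (μN : L →ₗ[K] L →ₗ[K] L →ₗ[K] L) (φN : L →ₗ[K] L),
      IsDeformationOfOrder (N + 1) A φL
        (fun i => if i = N + 1 then μN else μ i)
        (fun i => if i = N + 1 then φN else φ i))
    ↔ (∃ (f : L →ₗ[K] L →ₗ[K] L →ₗ[K] L) (g : L →ₗ[K] L),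
        (∀ x y z, f x y z = - f y x z) ∧ (∀ x y z, f x y z = - f x z y) ∧
        dCob (fun x y z => A.br x y z) (fun x y m => A.br x y m)
            ((fun X z => f (X 0).1 (X 0).2 z) : Cochain L L 1) = Ob3 μ N ∧
        dCob (fun x y z => A.br x y z) (fun x y m => A.br x y m)
            ((fun _ z => g z) : Cochain L L 0)
          + deltaOp (fun x => φL x) (fun x => φL x)
              ((fun X z => f (X 0).1 (X 0).2 z) : Cochain L L 1)
          = Ob2 μ φ N) :=
  extendable_iff_obstruction_trivial_general K L A φL N μ φ hdef
end
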